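/- arXiv:2602.12623 — 5 statements merged into one kernel-verified Lean document; each statement's English description precedes it below -/
import Mathlib

section
/- Let $a\ge 2$ and let $\Pi_{(a^2)}$ be the set of set partitions of $[2a]$ into two blocks of size $a$, embedded in $\mathbb{C}^{\binom{[2a]}{2}}$ as $0$-$1$ vectors. For pairwise distinct $i,j,k,l\in[2a]$, the polynomial $(x_{\{i,j\}}-\tfrac12)(x_{\{k,l\}}-\tfrac12)-(x_{\{i,k\}}-\tfrac12)(x_{\{j,l\}}-\tfrac12)$ vanishes on every point of $\Pi_{(a^2)}$. -/
open MvPolynomial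

/-- Variables indexed by 2-element subsets of `[n]`. -/
abbrev Idx (n : ℕ) := {S : Finset (Fin n) // S.card = 2}

open Classical in
/-- The 0-1 point associated to an unordered set partition of `[n]`. -/
noncomputable def ptOf {n : ℕ} (P : Finpartition (Finset.univ : Finset (Fin n))) : Idx n → ℂ :=
  fun S => if ∃ B ∈ P.parts, S.1 ⊆ B then 1 else 0

/-- The variable `x_{{i,j}}` (zero if `i = j`, but it is only used when `i ≠ j`). -/
noncomputable def XE {n : ℕ} (i j : Fin n) : MvPolynomial (Idx n) ℂ :=
  if h : i ≠ j then X ⟨{i, j}, Finset.card_pair h⟩ else 0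

/-! Since `P` has two blocks, "same block" is detected by a sign `ε : [2a] → {±1}`, `+1` on one
block and `-1` on the other: at the point of `P`, `x_{{i,j}} - 1/2 = ε i ε j / 2`. Both products
in the polynomial therefore evaluate to `ε i ε j ε k ε l / 4`. -/

namespace Finpartition

variable {α : Type*} [DecidableEq α] {s : Finset α} (P : Finpartition s)

theorem exists_pair_subset_iff_part_eq {x y : α} (hx : x ∈ s) (hy : y ∈ s) :
    (∃ B ∈ P.parts, {x, y} ⊆ B) ↔ P.part x = P.part y := by
  rw [← P.mem_part_iff_part_eq_part hx hy, mem_part_iff_exists]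
  simp only [Finset.insert_subset_iff, Finset.singleton_subset_iff]

theorem part_eq_part_iff_of_parts_eq_pair {B₁ B₂ : Finset α} (hparts : P.parts = {B₁, B₂})
    {x y : α} (hx : x ∈ s) (hy : y ∈ s) :
    P.part x = P.part y ↔ (x ∈ B₁ ↔ y ∈ B₁) := by
  have hB₁ : B₁ ∈ P.parts := by simp [hparts]
  rw [← P.part_eq_iff_mem hB₁, ← P.part_eq_iff_mem hB₁]
  have hxB := P.part_mem.2 hx
  have hyB := P.part_mem.2 hy
  rw [hparts, Finset.mem_insert, Finset.mem_singleton] at hxB hyB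
  grind

end Finpartition

def sideSign {α : Type*} [DecidableEq α] (B : Finset α) (x : α) : ℂ := if x ∈ B then 1 else -1

theorem ite_sub_half_eq_sideSign_mul {α : Type*} [DecidableEq α] {B : Finset α} {x y : α}
    {p : Prop} [Decidable p] (hp : p ↔ (x ∈ B ↔ y ∈ B)) :
    (if p then (1 : ℂ) else 0) - 1 / 2 = sideSign B x * sideSign B y / 2 := by
  by_cases hx : x ∈ B <;> by_cases hy : y ∈ B <;> norm_num [sideSign, hp, hx, hy]

theorem eval_XE_ptOf_sub_half {n : ℕ} (P : Finpartition (Finset.univ : Finset (Fin n)))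
    {B₁ B₂ : Finset (Fin n)} (hparts : P.parts = {B₁, B₂}) {x y : Fin n} (hxy : x ≠ y) :
    eval (ptOf P) (XE x y) - 1 / 2 = sideSign B₁ x * sideSign B₁ y / 2 := by
  rw [XE, dif_pos hxy, eval_X, ptOf]
  refine ite_sub_half_eq_sideSign_mul ?_
  rw [P.exists_pair_subset_iff_part_eq (Finset.mem_univ x) (Finset.mem_univ y),
    P.part_eq_part_iff_of_parts_eq_pair hparts (Finset.mem_univ x) (Finset.mem_univ y)]

theorem stmt5_general (a : ℕ)
    (P : Finpartition (Finset.univ : Finset (Fin (2 * a))))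
    (hcard : P.parts.card = 2)
    (i j k l : Fin (2 * a)) (hij : i ≠ j) (hik : i ≠ k)
    (hjl : j ≠ l) (hkl : k ≠ l) :
    eval (ptOf P)
      ((XE i j - C (1 / 2)) * (XE k l - C (1 / 2)) -
        (XE i k - C (1 / 2)) * (XE j l - C (1 / 2))) = 0 := by
  obtain ⟨B₁, B₂, -, hparts⟩ := Finset.card_eq_two.mp hcard
  simp only [map_sub, map_mul, eval_C]
  rw [eval_XE_ptOf_sub_half P hparts hij, eval_XE_ptOf_sub_half P hparts hkl,
    eval_XE_ptOf_sub_half P hparts hik, eval_XE_ptOf_sub_half P hparts hjl]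
  ring

theorem stmt5 (a : ℕ) (ha : 2 ≤ a)
    (P : Finpartition (Finset.univ : Finset (Fin (2 * a))))
    (hcard : P.parts.card = 2) (hP : ∀ B ∈ P.parts, B.card = a)
    (i j k l : Fin (2 * a)) (hij : i ≠ j) (hik : i ≠ k) (hil : i ≠ l)
    (hjk : j ≠ k) (hjl : j ≠ l) (hkl : k ≠ l) :
    eval (ptOf P)
      ((XE i j - C (1 / 2)) * (XE k l - C (1 / 2)) -
        (XE i k - C (1 / 2)) * (XE j l - C (1 / 2))) = 0 :=
  stmt5_general a P hcard i j k l hij hik hjl hkl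
end

section
/- Let $n\ge 1$, let $J(n)\subseteq\mathbb{C}[x_S: S\in\binom{[n]}{2}]$ be the ideal generated by (i) all sums $\sum_{j\ne i}x_{\{i,j\}}$, (ii) all products $x_S x_T$ with $S\cap T\ne\varnothing$, and (iii) all differences $x_{\{i,j\}}x_{\{k,l\}}-x_{\{i,k\}}x_{\{j,l\}}$ for pairwise distinct $i,j,k,l\in[n]$. Then for any two matchings $\tau,\tau'$ of $[n]$ (sets of pairwise disjoint $2$-element subsets) with $\bigcup_{S\in\tau}S=\bigcup_{T\in\tau'}T$, the matching monomials satisfy $\prod_{S\in\tau}x_S\equiv\prod_{T\in\tau'}x_T \pmod{J(n)}$. -/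
open MvPolynomial

/-- The sum `∑_{j ≠ i} x_{{i,j}}`. -/
noncomputable def rowSum {n : ℕ} (i : Fin n) : MvPolynomial (Idx n) ℂ :=
  ∑ j ∈ Finset.univ.erase i, XE i j

/-- The ideal `I(n)`, generated by the row sums and the products `x_S x_T` with
`S ∩ T ≠ ∅` (allowing `S = T`). -/
noncomputable def idealI (n : ℕ) : Ideal (MvPolynomial (Idx n) ℂ) :=
  Ideal.span ({f | ∃ i : Fin n, f = rowSum i} ∪
    {f | ∃ S T : Idx n, (S.1 ∩ T.1).Nonempty ∧ f = X S * X T})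

/-- A matching: a set of pairwise disjoint 2-element subsets of `[n]`. -/
def IsMatching {n : ℕ} (τ : Finset (Idx n)) : Prop :=
  ∀ S ∈ τ, ∀ T ∈ τ, S ≠ T → Disjoint S.1 T.1

/-- The ideal `J(n)`: `I(n)` together with the differences
`x_{{i,j}} x_{{k,l}} - x_{{i,k}} x_{{j,l}}` for pairwise distinct `i,j,k,l`. -/
noncomputable def idealJ (n : ℕ) : Ideal (MvPolynomial (Idx n) ℂ) :=
  idealI n ⊔ Ideal.span
    {f | ∃ i j k l : Fin n, i ≠ j ∧ i ≠ k ∧ i ≠ l ∧ j ≠ k ∧ j ≠ l ∧ k ≠ l ∧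
      f = XE i j * XE k l - XE i k * XE j l}

lemma exists_pair_of_mem {n : ℕ} (S : Idx n) (i : Fin n) (hi : i ∈ S.1) :
    ∃ k, i ≠ k ∧ S.1 = {i, k} := by
  obtain ⟨a, b, hab, hS⟩ := Finset.card_eq_two.mp S.2
  rw [hS] at hi ⊢
  rcases Finset.mem_insert.mp hi with rfl | hb
  · exact ⟨b, hab, rfl⟩
  · rw [Finset.mem_singleton] at hb; subst hb
    exact ⟨a, hab.symm, by ext x; simp [or_comm]⟩

lemma exchange_mem {n : ℕ} {i j k l : Fin n} (hij : i ≠ j) (hik : i ≠ k) (hil : i ≠ l)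
    (hjk : j ≠ k) (hjl : j ≠ l) (hkl : k ≠ l) :
    (X ⟨{i,j}, Finset.card_pair hij⟩ * X ⟨{k,l}, Finset.card_pair hkl⟩
      - X ⟨{i,k}, Finset.card_pair hik⟩ * X ⟨{j,l}, Finset.card_pair hjl⟩ :
      MvPolynomial (Idx n) ℂ) ∈ idealJ n := by
  refine Ideal.mem_sup_right (Ideal.subset_span ?_)
  exact ⟨i, j, k, l, hij, hik, hil, hjk, hjl, hkl, by simp [XE, hij, hik, hjl, hkl]⟩

lemma sup_erase_eq {n : ℕ} {τ : Finset (Idx n)} (hτ : IsMatching τ) {S : Idx n} (hS : S ∈ τ) :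
    (τ.erase S).sup (fun T => T.1) = τ.sup (fun T => T.1) \ S.1 := by
  have hd : Disjoint S.1 ((τ.erase S).sup fun T => T.1) := by
    rw [Finset.disjoint_sup_right]
    intro T hT
    exact hτ S hS T (Finset.mem_of_mem_erase hT) (Finset.ne_of_mem_erase hT).symm
  conv_rhs => rw [← Finset.insert_erase hS, Finset.sup_insert]
  ext x
  have h2 : x ∈ S.1 → x ∉ (τ.erase S).sup (fun T => T.1) := fun h => Finset.disjoint_left.mp hd h
  simp only [Finset.mem_sdiff, Finset.sup_eq_union, Finset.mem_union]
  tauto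

lemma matching_empty_of_sup_empty {n : ℕ} {τ : Finset (Idx n)}
    (h : τ.sup (fun S => S.1) = ∅) : τ = ∅ := by
  rcases Finset.eq_empty_or_nonempty τ with rfl | ⟨T, hT⟩
  · rfl
  · exfalso
    obtain ⟨x, hx⟩ := Finset.card_pos.mp (show 0 < T.1.card by rw [T.2]; norm_num)
    have hmem : x ∈ τ.sup (fun S => S.1) := Finset.mem_sup.mpr ⟨T, hT, hx⟩
    simp [h] at hmem

lemma key (n : ℕ) : ∀ (m : ℕ) (τ τ' : Finset (Idx n)), IsMatching τ → IsMatching τ' →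
    τ.sup (fun S => S.1) = τ'.sup (fun S => S.1) → τ.card ≤ m →
    Ideal.Quotient.mk (idealJ n) (∏ S ∈ τ, X S)
      = Ideal.Quotient.mk (idealJ n) (∏ S ∈ τ', X S) := by
  intro m
  induction m with
  | zero =>
    intro τ τ' hτ hτ' hU hc
    have h0 : τ = ∅ := Finset.card_eq_zero.mp (Nat.le_zero.mp hc)
    subst h0
    have h1 : τ' = ∅ := matching_empty_of_sup_empty (by simpa using hU.symm)
    simp [h1]
  | succ m ih =>
    intro τ τ' hτ hτ' hU hc
    rcases Finset.eq_empty_or_nonempty τ with rfl | ⟨S, hSτ⟩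
    · have h1 : τ' = ∅ := matching_empty_of_sup_empty (by simpa using hU.symm)
      simp [h1]
    have step : ∀ σ : Finset (Idx n), IsMatching σ →
        σ.sup (fun T => T.1) = τ.sup (fun T => T.1) → S ∈ σ →
        Ideal.Quotient.mk (idealJ n) (∏ T ∈ τ, X T)
          = Ideal.Quotient.mk (idealJ n) (∏ T ∈ σ, X T) := by
      intro σ hσ hsup hSσ
      rw [← Finset.mul_prod_erase τ _ hSτ, ← Finset.mul_prod_erase σ _ hSσ, map_mul, map_mul]
      congr 1
      refine ih (τ.erase S) (σ.erase S) ?_ ?_ ?_ ?_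
      · intro A hA B hB hAB
        exact hτ A (Finset.mem_of_mem_erase hA) B (Finset.mem_of_mem_erase hB) hAB
      · intro A hA B hB hAB
        exact hσ A (Finset.mem_of_mem_erase hA) B (Finset.mem_of_mem_erase hB) hAB
      · rw [sup_erase_eq hτ hSτ, sup_erase_eq hσ hSσ, hsup]
      · have := Finset.card_erase_of_mem hSτ
        omega
    obtain ⟨i, hiS⟩ := Finset.card_pos.mp (show 0 < S.1.card by rw [S.2]; norm_num)
    obtain ⟨j, hij, hSij⟩ := exists_pair_of_mem S i hiS
    have hjS : j ∈ S.1 := by rw [hSij]; simp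
    obtain ⟨T, hTτ', hiT⟩ := Finset.mem_sup.mp (hU ▸ Finset.mem_sup.mpr ⟨S, hSτ, hiS⟩)
    obtain ⟨k, hik, hTik⟩ := exists_pair_of_mem T i hiT
    by_cases hkj : k = j
    · subst hkj
      have hTS : T = S := Subtype.ext (hTik.trans hSij.symm)
      exact step τ' hτ' hU.symm (hTS ▸ hTτ')
    · have hjk : j ≠ k := fun h => hkj h.symm
      obtain ⟨T', hT'τ', hjT'⟩ := Finset.mem_sup.mp (hU ▸ Finset.mem_sup.mpr ⟨S, hSτ, hjS⟩)
      obtain ⟨l, hjl, hT'jl⟩ := exists_pair_of_mem T' j hjT'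
      have hkT : k ∈ T.1 := by rw [hTik]; simp
      have hlT' : l ∈ T'.1 := by rw [hT'jl]; simp
      have hTT' : T ≠ T' := by
        intro h
        rw [← h, hTik] at hjT'
        rcases Finset.mem_insert.mp hjT' with h' | h'
        · exact hij h'.symm
        · exact hjk (Finset.mem_singleton.mp h')
      have hdisj := hτ' T hTτ' T' hT'τ' hTT'
      have hil : i ≠ l := fun h => Finset.disjoint_left.mp hdisj hiT (h ▸ hlT')
      have hkl : k ≠ l := fun h => Finset.disjoint_left.mp hdisj hkT (h ▸ hlT')
      set S' : Idx n := ⟨{k, l}, Finset.card_pair hkl⟩ with hS'def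
      set ρ : Finset (Idx n) := (τ'.erase T).erase T' with hρdef
      have hρ : ∀ U ∈ ρ, U ∈ τ' ∧ U ≠ T ∧ U ≠ T' := by
        intro U hUρ
        exact ⟨Finset.mem_of_mem_erase (Finset.mem_of_mem_erase hUρ),
          Finset.ne_of_mem_erase (Finset.mem_of_mem_erase hUρ), Finset.ne_of_mem_erase hUρ⟩
      have hT'm : T' ∈ τ'.erase T := Finset.mem_erase.mpr ⟨hTT'.symm, hT'τ'⟩
      have hSS' : S ≠ S' := by
        intro h
        have : i ∈ S'.1 := h ▸ hiS
        rcases Finset.mem_insert.mp this with h' | h'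
        · exact hik h'
        · exact hil (Finset.mem_singleton.mp h')
      have hdSU : ∀ U ∈ ρ, Disjoint S.1 U.1 := by
        intro U hUρ
        obtain ⟨hU1, hUT, hUT'⟩ := hρ U hUρ
        rw [hSij, Finset.disjoint_left]
        intro a ha
        rcases Finset.mem_insert.mp ha with rfl | ha'
        · exact Finset.disjoint_left.mp (hτ' T hTτ' U hU1 (Ne.symm hUT)) hiT
        · rw [Finset.mem_singleton] at ha'; subst ha'
          exact Finset.disjoint_left.mp (hτ' T' hT'τ' U hU1 (Ne.symm hUT')) hjT'
      have hdS'U : ∀ U ∈ ρ, Disjoint S'.1 U.1 := by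
        intro U hUρ
        obtain ⟨hU1, hUT, hUT'⟩ := hρ U hUρ
        rw [Finset.disjoint_left]
        intro a ha
        rcases Finset.mem_insert.mp ha with rfl | ha'
        · exact Finset.disjoint_left.mp (hτ' T hTτ' U hU1 (Ne.symm hUT)) hkT
        · rw [Finset.mem_singleton] at ha'; subst ha'
          exact Finset.disjoint_left.mp (hτ' T' hT'τ' U hU1 (Ne.symm hUT')) hlT'
      have hkS' : k ∈ S'.1 := by rw [hS'def]; simp
      have hSρ : S ∉ ρ := fun h => by
        have h2 := hdSU S h; rw [disjoint_self] at h2; rw [h2] at hiS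
        exact Finset.notMem_empty i hiS
      have hS'ρ : S' ∉ ρ := fun h => by
        have h2 := hdS'U S' h; rw [disjoint_self] at h2; rw [h2] at hkS'
        exact Finset.notMem_empty k hkS'
      have hdSS' : Disjoint S.1 S'.1 := by
        rw [hSij, Finset.disjoint_left]
        intro a ha
        rcases Finset.mem_insert.mp ha with rfl | ha'
        · intro h
          rcases Finset.mem_insert.mp h with h' | h'
          · exact hik h'
          · exact hil (Finset.mem_singleton.mp h')
        · rw [Finset.mem_singleton] at ha'; subst ha'
          intro h
          rcases Finset.mem_insert.mp h with h' | h'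
          · exact hjk h'
          · exact hjl (Finset.mem_singleton.mp h')
      set τ'' : Finset (Idx n) := insert S (insert S' ρ) with hτ''def
      have hmτ'' : IsMatching τ'' := by
        intro A hA B hB hAB
        rw [hτ''def] at hA hB
        simp only [Finset.mem_insert] at hA hB
        rcases hA with rfl | rfl | hA <;> rcases hB with rfl | rfl | hB
        · exact absurd rfl hAB
        · exact hdSS'
        · exact hdSU B hB
        · exact hdSS'.symm
        · exact absurd rfl hAB
        · exact hdS'U B hB
        · exact (hdSU A hA).symm
        · exact (hdS'U A hA).symm
        · exact hτ' A (hρ A hA).1 B (hρ B hB).1 hAB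
      have hτ'eq : τ' = insert T (insert T' ρ) := by
        rw [hρdef, Finset.insert_erase hT'm, Finset.insert_erase hTτ']
      have hsup'' : τ''.sup (fun U => U.1) = τ'.sup (fun U => U.1) := by
        rw [hτ'eq, hτ''def]
        simp only [Finset.sup_insert]
        rw [hSij, hTik, hT'jl, show S'.1 = {k, l} from rfl]
        ext x
        simp only [Finset.sup_eq_union, Finset.mem_union, Finset.mem_insert,
          Finset.mem_singleton]
        tauto
      have hSnotin : S ∉ insert S' ρ := by
        simp only [Finset.mem_insert]
        push_neg
        exact ⟨hSS', hSρ⟩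
      have hprod'' : (∏ U ∈ τ'', X U : MvPolynomial (Idx n) ℂ)
          = X S * X S' * ∏ U ∈ ρ, X U := by
        rw [hτ''def, Finset.prod_insert hSnotin, Finset.prod_insert hS'ρ, mul_assoc]
      have hprod' : (∏ U ∈ τ', X U : MvPolynomial (Idx n) ℂ)
          = X T * X T' * ∏ U ∈ ρ, X U := by
        rw [← Finset.mul_prod_erase τ' _ hTτ', ← Finset.mul_prod_erase _ _ hT'm, ← mul_assoc,
          hρdef]
      have hTe : T = ⟨{i, k}, Finset.card_pair hik⟩ := Subtype.ext hTik
      have hT'e : T' = ⟨{j, l}, Finset.card_pair hjl⟩ := Subtype.ext hT'jl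
      have hSe : S = ⟨{i, j}, Finset.card_pair hij⟩ := Subtype.ext hSij
      have hgen : (X S * X S' - X T * X T' : MvPolynomial (Idx n) ℂ) ∈ idealJ n := by
        rw [hSe, hTe, hT'e, hS'def]
        exact exchange_mem hij hik hil hjk hjl hkl
      have hmid : Ideal.Quotient.mk (idealJ n) (∏ U ∈ τ'', X U)
          = Ideal.Quotient.mk (idealJ n) (∏ U ∈ τ', X U) := by
        rw [Ideal.Quotient.eq, hprod', hprod'', ← sub_mul]
        exact Ideal.mul_mem_right _ _ hgen
      exact (step τ'' hmτ'' (hsup''.trans hU.symm) (Finset.mem_insert_self _ _)).trans hmid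

theorem stmt15 (n : ℕ) (hn : 1 ≤ n) (τ τ' : Finset (Idx n))
    (hτ : IsMatching τ) (hτ' : IsMatching τ')
    (hU : τ.sup (fun S => S.1) = τ'.sup (fun S => S.1)) :
    (∏ S ∈ τ, (X S : MvPolynomial (Idx n) ℂ)) - ∏ S ∈ τ', X S ∈ idealJ n := by
  exact Ideal.Quotient.eq.mp (key n τ.card τ τ' hτ hτ' hU le_rfl)
end

section
/- Let $I_{n,m}\subseteq\mathbb{C}[x_S : S\in\binom{[n]}{2}]$ be the ideal generated by all squares $x_S^2$, all differences $x_{\{i,j\}}x_{\{j,k\}}-x_{\{i,k\}}x_{\{j,k\}}$ for pairwise distinct $i,j,k\in[n]$, and all monomials $\prod_{e\in E(T)}x_e$ for trees $T$ with $m+1$ vertices in $[n]$. If $F_1$ and $F_2$ are forests on vertex set $[n]$ inducing the same partition of $[n]$ into connected components, then $\prod_{e\in E(F_1)}x_e \equiv \prod_{e\in E(F_2)}x_e \pmod{I_{n,m}}$. -/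
open MvPolynomial

/-- Two vertices are joined by an edge of the edge set `E`. -/
def edgeRel {n : ℕ} (E : Finset (Idx n)) (i j : Fin n) : Prop :=
  ∃ S ∈ E, i ∈ S.1 ∧ j ∈ S.1 ∧ i ≠ j

/-- The vertex set of an edge set. -/
def vertexSet {n : ℕ} (E : Finset (Idx n)) : Finset (Fin n) :=
  E.sup fun S => S.1

/-- `E` is the edge set of a tree: connected on its vertex set, with
(number of edges) + 1 = (number of vertices). -/
def IsTreeOn {n : ℕ} (E : Finset (Idx n)) : Prop :=
  (∀ i ∈ vertexSet E, ∀ j ∈ vertexSet E, Relation.ReflTransGen (edgeRel E) i j) ∧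
    E.card + 1 = (vertexSet E).card

/-- The ideal `I_{n,m}`: generated by all squares `x_S^2`, all differences
`x_{{i,j}} x_{{j,k}} - x_{{i,k}} x_{{j,k}}`, and the monomials of all trees with
`m+1` vertices in `[n]`. -/
noncomputable def idealInm (n m : ℕ) : Ideal (MvPolynomial (Idx n) ℂ) :=
  Ideal.span ({f | ∃ S : Idx n, f = X S ^ 2} ∪
    {f | ∃ i j k : Fin n, i ≠ j ∧ j ≠ k ∧ i ≠ k ∧ f = XE i j * XE j k - XE i k * XE j k} ∪
    {f | ∃ E : Finset (Idx n), IsTreeOn E ∧ (vertexSet E).card = m + 1 ∧ f = ∏ S ∈ E, X S})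

/-- `E` is the edge set of a forest: every edge is a bridge. -/
def IsForest {n : ℕ} (E : Finset (Idx n)) : Prop :=
  ∀ S ∈ E, ∀ i ∈ S.1, ∀ j ∈ S.1, i ≠ j →
    ¬ Relation.ReflTransGen (edgeRel (E.erase S)) i j

/-! ### Auxiliary algebraic lemmas -/

section Aux
variable {n m : ℕ}

lemma XE_symm (i j : Fin n) : XE i j = XE j i := by
  unfold XE
  by_cases h : i = j
  · subst h; rfl
  · rw [dif_pos h, dif_pos (Ne.symm h)]
    congr 1
    exact Subtype.ext (Finset.pair_comm i j)

lemma gen_mem (i j k : Fin n) (hij : i ≠ j) (hjk : j ≠ k) (hik : i ≠ k) :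
    XE i j * XE j k - XE i k * XE j k ∈ idealInm n m := by
  apply Ideal.subset_span
  exact Or.inl (Or.inr ⟨i, j, k, hij, hjk, hik, rfl⟩)

/-- Congruence mod the ideal. -/
def Cong (n m : ℕ) (p q : MvPolynomial (Idx n) ℂ) : Prop := p - q ∈ idealInm n m

lemma Cong.refl (p : MvPolynomial (Idx n) ℂ) : Cong n m p p := by
  simp [Cong, Ideal.zero_mem]

lemma Cong.of_eq {p q : MvPolynomial (Idx n) ℂ} (h : p = q) : Cong n m p q := by
  subst h; exact Cong.refl p

lemma Cong.symm {p q : MvPolynomial (Idx n) ℂ} (h : Cong n m p q) : Cong n m q p := by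
  have := (idealInm n m).neg_mem h
  simpa [Cong] using this

lemma Cong.trans {p q r : MvPolynomial (Idx n) ℂ} (h1 : Cong n m p q) (h2 : Cong n m q r) :
    Cong n m p r := by
  have := (idealInm n m).add_mem h1 h2
  simpa [Cong, sub_add_sub_cancel] using this

lemma Cong.mul_right {p q : MvPolynomial (Idx n) ℂ} (h : Cong n m p q)
    (r : MvPolynomial (Idx n) ℂ) : Cong n m (p * r) (q * r) := by
  have := (idealInm n m).mul_mem_right r h
  simpa [Cong, sub_mul] using this

lemma Cong.mul_left {p q : MvPolynomial (Idx n) ℂ} (h : Cong n m p q)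
    (r : MvPolynomial (Idx n) ℂ) : Cong n m (r * p) (r * q) := by
  have := (idealInm n m).mul_mem_left r h
  simpa [Cong, mul_sub] using this

/-- The basic swap move: `x_{ij} x_{jk} ≡ x_{ik} x_{jk}`. -/
lemma cong_swap (i j k : Fin n) (hij : i ≠ j) (hjk : j ≠ k) (hik : i ≠ k) :
    Cong n m (XE i j * XE j k) (XE i k * XE j k) := gen_mem i j k hij hjk hik

/-- Rerooting a star. -/
lemma reroot (c d : Fin n) (hcd : c ≠ d) (V : Finset (Fin n)) (hc : c ∉ V) (hd : d ∉ V) :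
    Cong n m (XE c d * ∏ v ∈ V, XE d v) (XE c d * ∏ v ∈ V, XE c v) := by
  classical
  induction V using Finset.induction with
  | empty => exact Cong.refl _
  | @insert w V hw ih =>
    have hcw : c ≠ w := fun h => hc (h ▸ Finset.mem_insert_self w V)
    have hdw : d ≠ w := fun h => hd (h ▸ Finset.mem_insert_self w V)
    have hcV : c ∉ V := fun h => hc (Finset.mem_insert_of_mem h)
    have hdV : d ∉ V := fun h => hd (Finset.mem_insert_of_mem h)
    rw [Finset.prod_insert hw, Finset.prod_insert hw]
    have h1 : Cong n m (XE w d * XE d c) (XE w c * XE d c) :=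
      cong_swap w d c hdw.symm hcd.symm hcw.symm
    have h2 : Cong n m (XE c d * XE d w * ∏ v ∈ V, XE d v)
        (XE c d * XE c w * ∏ v ∈ V, XE d v) := by
      have h3 := h1.mul_right (∏ v ∈ V, XE d v)
      have e1 : XE c d * XE d w = XE w d * XE d c := by
        rw [XE_symm c d, XE_symm d w]; ring
      have e2 : XE c d * XE c w = XE w c * XE d c := by
        rw [XE_symm w c, XE_symm d c]; ring
      rw [e1, e2]; exact h3
    have h4 : Cong n m (XE c d * XE c w * ∏ v ∈ V, XE d v)
        (XE c d * XE c w * ∏ v ∈ V, XE c v) := by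
      have := (ih hcV hdV).mul_left (XE c w)
      have e1 : XE c w * (XE c d * ∏ v ∈ V, XE d v) = XE c d * XE c w * ∏ v ∈ V, XE d v := by ring
      have e2 : XE c w * (XE c d * ∏ v ∈ V, XE c v) = XE c d * XE c w * ∏ v ∈ V, XE c v := by ring
      rw [e1, e2] at this; exact this
    have := h2.trans h4
    have e1 : XE c d * XE d w * ∏ v ∈ V, XE d v = XE c d * (XE d w * ∏ v ∈ V, XE d v) := by ring
    have e2 : XE c d * XE c w * ∏ v ∈ V, XE c v = XE c d * (XE c w * ∏ v ∈ V, XE c v) := by ring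
    rw [e1, e2] at this; exact this

/-- Sliding one endpoint of an extra edge onto the center of a star. -/
lemma slide (A : Finset (Fin n)) (hA : A.Nonempty) (a : Fin n) (ha : a ∈ A) (b : Fin n)
    (hb : b ∉ A) :
    Cong n m (XE a b * ∏ v ∈ A.erase (A.min' hA), XE (A.min' hA) v)
      (XE (A.min' hA) b * ∏ v ∈ A.erase (A.min' hA), XE (A.min' hA) v) := by
  classical
  set c := A.min' hA with hc
  by_cases hac : a = c
  · subst hac; exact Cong.refl _
  · have hamem : a ∈ A.erase c := Finset.mem_erase.mpr ⟨hac, ha⟩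
    rw [← Finset.prod_erase_mul _ _ hamem]
    have hab : a ≠ b := fun h => hb (h ▸ ha)
    have hcb : c ≠ b := fun h => hb (h ▸ A.min'_mem hA)
    have h1 : Cong n m (XE b a * XE a c) (XE b c * XE a c) :=
      cong_swap b a c hab.symm hac hcb.symm
    have h2 : Cong n m (XE a b * XE c a) (XE c b * XE c a) := by
      have e1 : XE a b * XE c a = XE b a * XE a c := by rw [XE_symm a b, XE_symm c a]
      have e2 : XE c b * XE c a = XE b c * XE a c := by rw [XE_symm c b, XE_symm c a]
      rw [e1, e2]; exact h1
    have h3 := h2.mul_left (∏ v ∈ (A.erase c).erase a, XE c v)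
    have e3 : ∀ t : MvPolynomial (Idx n) ℂ,
        (∏ v ∈ (A.erase c).erase a, XE c v) * (t * XE c a)
        = t * ((∏ v ∈ (A.erase c).erase a, XE c v) * XE c a) := by intro t; ring
    rw [e3, e3] at h3
    exact h3

/-- Merging two stars joined by an extra edge into one star. -/
lemma star_merge (A B : Finset (Fin n)) (hA : A.Nonempty) (hB : B.Nonempty)
    (hdisj : Disjoint A B) (a : Fin n) (ha : a ∈ A) (b : Fin n) (hb : b ∈ B) :
    Cong n m
      (XE a b * ((∏ v ∈ A.erase (A.min' hA), XE (A.min' hA) v) *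
        ∏ v ∈ B.erase (B.min' hB), XE (B.min' hB) v))
      (∏ v ∈ (A ∪ B).erase ((A ∪ B).min' (hA.mono Finset.subset_union_left)),
        XE ((A ∪ B).min' (hA.mono Finset.subset_union_left)) v) := by
  classical
  set rA := A.min' hA with hrA
  set rB := B.min' hB with hrB
  have hAB : (A ∪ B).Nonempty := hA.mono Finset.subset_union_left
  set r := (A ∪ B).min' hAB with hr
  have hrAA : rA ∈ A := A.min'_mem hA
  have hrBB : rB ∈ B := B.min'_mem hB
  have hanB : a ∉ B := fun h => (Finset.disjoint_left.mp hdisj ha) h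
  have hbnA : b ∉ A := fun h => (Finset.disjoint_left.mp hdisj h) hb
  have hrAnB : rA ∉ B := fun h => (Finset.disjoint_left.mp hdisj hrAA) h
  have hrBnA : rB ∉ A := fun h => (Finset.disjoint_left.mp hdisj h) hrBB
  have hrArB : rA ≠ rB := fun h => hrAnB (h ▸ hrBB)
  have s1 : Cong n m
      (XE a b * ((∏ v ∈ A.erase rA, XE rA v) * ∏ v ∈ B.erase rB, XE rB v))
      (XE rA b * ((∏ v ∈ A.erase rA, XE rA v) * ∏ v ∈ B.erase rB, XE rB v)) := by
    have := (slide (m := m) A hA a ha b hbnA).mul_right (∏ v ∈ B.erase rB, XE rB v)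
    have e : ∀ t : MvPolynomial (Idx n) ℂ,
        t * (∏ v ∈ A.erase rA, XE rA v) * ∏ v ∈ B.erase rB, XE rB v
        = t * ((∏ v ∈ A.erase rA, XE rA v) * ∏ v ∈ B.erase rB, XE rB v) := by intro t; ring
    rw [e, e] at this; exact this
  have s2 : Cong n m
      (XE rA b * ((∏ v ∈ A.erase rA, XE rA v) * ∏ v ∈ B.erase rB, XE rB v))
      (XE rA rB * ((∏ v ∈ A.erase rA, XE rA v) * ∏ v ∈ B.erase rB, XE rB v)) := by
    have h := (slide (m := m) B hB b hb rA hrAnB).mul_right (∏ v ∈ A.erase rA, XE rA v)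
    have e : ∀ t : MvPolynomial (Idx n) ℂ,
        t * (∏ v ∈ B.erase rB, XE rB v) * ∏ v ∈ A.erase rA, XE rA v
        = t * ((∏ v ∈ A.erase rA, XE rA v) * ∏ v ∈ B.erase rB, XE rB v) := by intro t; ring
    rw [XE_symm b rA, XE_symm (B.min' hB) rA] at h
    rw [e, e] at h
    exact h
  have hmin : r = rA ∨ r = rB := by
    have := (A ∪ B).min'_mem hAB
    rw [← hr] at this
    rcases Finset.mem_union.mp this with h | h
    · left
      exact le_antisymm (Finset.min'_le _ _ (Finset.mem_union_left _ hrAA))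
        (Finset.min'_le _ _ h) |>.symm ▸ rfl
    · right
      exact le_antisymm (Finset.min'_le _ _ (Finset.mem_union_right _ hrBB))
        (Finset.min'_le _ _ h) |>.symm ▸ rfl
  rcases hmin with hcase | hcase
  · have hsplit : (A ∪ B).erase rA = A.erase rA ∪ B := by
      ext v
      simp only [Finset.mem_erase, Finset.mem_union]
      constructor
      · rintro ⟨hv, h | h⟩
        · exact Or.inl ⟨hv, h⟩
        · exact Or.inr h
      · rintro (⟨hv, h⟩ | h)
        · exact ⟨hv, Or.inl h⟩
        · exact ⟨fun e => hrAnB (e ▸ h), Or.inr h⟩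
    have hd2 : Disjoint (A.erase rA) B := hdisj.mono_left (Finset.erase_subset _ _)
    have htarget : ∏ v ∈ (A ∪ B).erase r, XE r v
        = (∏ v ∈ A.erase rA, XE rA v) * (XE rA rB * ∏ v ∈ B.erase rB, XE rA v) := by
      rw [hcase, hsplit, Finset.prod_union hd2, ← Finset.mul_prod_erase B _ hrBB]
    have s3 : Cong n m
        (XE rA rB * ((∏ v ∈ A.erase rA, XE rA v) * ∏ v ∈ B.erase rB, XE rB v))
        (XE rA rB * ((∏ v ∈ A.erase rA, XE rA v) * ∏ v ∈ B.erase rB, XE rA v)) := by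
      have hrAV : rA ∉ B.erase rB := fun h => hrAnB (Finset.mem_of_mem_erase h)
      have hrBV : rB ∉ B.erase rB := Finset.notMem_erase _ _
      have h := (reroot (m := m) rA rB hrArB (B.erase rB) hrAV hrBV).mul_left
        (∏ v ∈ A.erase rA, XE rA v)
      have e : ∀ t u : MvPolynomial (Idx n) ℂ, t * (XE rA rB * u) = XE rA rB * (t * u) := by
        intro t u; ring
      rw [e, e] at h; exact h
    have := (s1.trans s2).trans s3
    rw [htarget]
    have e2 : XE rA rB * ((∏ v ∈ A.erase rA, XE rA v) * ∏ v ∈ B.erase rB, XE rA v)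
        = (∏ v ∈ A.erase rA, XE rA v) * (XE rA rB * ∏ v ∈ B.erase rB, XE rA v) := by ring
    rw [e2] at this; exact this
  · have hsplit : (A ∪ B).erase rB = B.erase rB ∪ A := by
      ext v
      simp only [Finset.mem_erase, Finset.mem_union]
      constructor
      · rintro ⟨hv, h | h⟩
        · exact Or.inr h
        · exact Or.inl ⟨hv, h⟩
      · rintro (⟨hv, h⟩ | h)
        · exact ⟨hv, Or.inr h⟩
        · exact ⟨fun e => hrBnA (e ▸ h), Or.inl h⟩
    have hd2 : Disjoint (B.erase rB) A := (hdisj.symm).mono_left (Finset.erase_subset _ _)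
    have htarget : ∏ v ∈ (A ∪ B).erase r, XE r v
        = (∏ v ∈ B.erase rB, XE rB v) * (XE rB rA * ∏ v ∈ A.erase rA, XE rB v) := by
      rw [hcase, hsplit, Finset.prod_union hd2, ← Finset.mul_prod_erase A _ hrAA]
    have s3 : Cong n m
        (XE rA rB * ((∏ v ∈ A.erase rA, XE rA v) * ∏ v ∈ B.erase rB, XE rB v))
        ((∏ v ∈ B.erase rB, XE rB v) * (XE rB rA * ∏ v ∈ A.erase rA, XE rB v)) := by
      have hrBV : rB ∉ A.erase rA := fun h => hrBnA (Finset.mem_of_mem_erase h)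
      have hrAV : rA ∉ A.erase rA := Finset.notMem_erase _ _
      have h := (reroot (m := m) rB rA hrArB.symm (A.erase rA) hrBV hrAV).mul_left
        (∏ v ∈ B.erase rB, XE rB v)
      have e1 : XE rA rB * ((∏ v ∈ A.erase rA, XE rA v) * ∏ v ∈ B.erase rB, XE rB v)
          = (∏ v ∈ B.erase rB, XE rB v) * (XE rB rA * ∏ v ∈ A.erase rA, XE rA v) := by
        rw [XE_symm rA rB]; ring
      rw [e1]; exact h
    exact ((s1.trans s2).trans s3).trans (by rw [htarget]; exact Cong.refl _)

end Aux

/-! ### Graph lemmas -/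

section Graph
variable {n : ℕ}

/-- Reachability. -/
abbrev Reach (F : Finset (Idx n)) : Fin n → Fin n → Prop :=
  Relation.ReflTransGen (edgeRel F)

lemma edgeRel_symm {F : Finset (Idx n)} {i j : Fin n} (h : edgeRel F i j) : edgeRel F j i := by
  obtain ⟨S, hS, hi, hj, hij⟩ := h
  exact ⟨S, hS, hj, hi, hij.symm⟩

lemma Reach.symm {F : Finset (Idx n)} {i j : Fin n} (h : Reach F i j) : Reach F j i :=
  (@Relation.ReflTransGen.stdSymm _ (edgeRel F) ⟨fun _ _ => edgeRel_symm⟩).symm _ _ h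

lemma Reach.mono {F F' : Finset (Idx n)} (hFF : F ⊆ F') {i j : Fin n} (h : Reach F i j) :
    Reach F' i j := by
  refine Relation.ReflTransGen.mono (r := edgeRel F) (p := edgeRel F')
    (fun a b (hab : edgeRel F a b) => match hab with
      | ⟨S, hS, h1, h2, h3⟩ => ⟨S, hFF hS, h1, h2, h3⟩) i j h

lemma mem_vertexSet_of_edge {F : Finset (Idx n)} {S : Idx n} (hS : S ∈ F) {v : Fin n}
    (hv : v ∈ S.1) : v ∈ vertexSet F :=
  Finset.mem_sup.mpr ⟨S, hS, hv⟩

lemma mem_vertexSet_iff {F : Finset (Idx n)} {v : Fin n} :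
    v ∈ vertexSet F ↔ ∃ u, u ≠ v ∧ Reach F v u := by
  constructor
  · intro h
    obtain ⟨S, hS, hv⟩ := Finset.mem_sup.mp h
    obtain ⟨x, y, hxy, hxyS⟩ := Finset.card_eq_two.mp S.2
    have : v = x ∨ v = y := by
      rw [hxyS] at hv; simpa using hv
    rcases this with rfl | rfl
    · exact ⟨y, fun h => hxy h.symm,
        Relation.ReflTransGen.single ⟨S, hS, hv, by simp [hxyS], hxy⟩⟩
    · exact ⟨x, fun h => hxy h,
        Relation.ReflTransGen.single ⟨S, hS, hv, by simp [hxyS], fun h => hxy h.symm⟩⟩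
  · rintro ⟨u, huv, h⟩
    rcases (Relation.ReflTransGen.cases_head h) with rfl | ⟨c, hc, -⟩
    · exact absurd rfl huv
    · obtain ⟨S, hS, hv, -, -⟩ := hc
      exact mem_vertexSet_of_edge hS hv

/-- Decomposition of reachability after removing one edge. -/
lemma reach_erase_split {F : Finset (Idx n)} {S₀ : Idx n} (hS₀ : S₀ ∈ F) {a b : Fin n}
    (hab : a ≠ b) (hSab : S₀.1 = {a, b}) {v u : Fin n} (h : Reach F v u) :
    Reach (F.erase S₀) v u ∨ (Reach (F.erase S₀) v a ∧ Reach (F.erase S₀) b u) ∨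
      (Reach (F.erase S₀) v b ∧ Reach (F.erase S₀) a u) := by
  induction h with
  | refl => exact Or.inl Relation.ReflTransGen.refl
  | @tail c u hvc hcu ih =>
    obtain ⟨S, hS, hc, hu, hcune⟩ := hcu
    by_cases hSS : S = S₀
    · subst hSS
      rw [hSab] at hc hu
      simp only [Finset.mem_insert, Finset.mem_singleton] at hc hu
      have hcase : (c = a ∧ u = b) ∨ (c = b ∧ u = a) := by
        rcases hc with rfl | rfl <;> rcases hu with rfl | rfl <;> simp_all
      rcases hcase with ⟨rfl, rfl⟩ | ⟨rfl, rfl⟩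
      · rcases ih with h | ⟨h1, h2⟩ | ⟨h1, h2⟩
        · exact Or.inr (Or.inl ⟨h, Relation.ReflTransGen.refl⟩)
        · exact Or.inr (Or.inl ⟨h1, Relation.ReflTransGen.refl⟩)
        · exact Or.inl h1
      · rcases ih with h | ⟨h1, h2⟩ | ⟨h1, h2⟩
        · exact Or.inr (Or.inr ⟨h, Relation.ReflTransGen.refl⟩)
        · exact Or.inl h1
        · exact Or.inr (Or.inr ⟨h1, Relation.ReflTransGen.refl⟩)
    · have hstep : edgeRel (F.erase S₀) c u := ⟨S, Finset.mem_erase.mpr ⟨hSS, hS⟩, hc, hu, hcune⟩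
      rcases ih with h | ⟨h1, h2⟩ | ⟨h1, h2⟩
      · exact Or.inl (h.tail hstep)
      · exact Or.inr (Or.inl ⟨h1, h2.tail hstep⟩)
      · exact Or.inr (Or.inr ⟨h1, h2.tail hstep⟩)

/-- Connected component as a finset. -/
noncomputable def comp (F : Finset (Idx n)) (v : Fin n) : Finset (Fin n) := by
  classical exact Finset.univ.filter (fun u => Reach F v u)

lemma mem_comp {F : Finset (Idx n)} {v u : Fin n} : u ∈ comp F v ↔ Reach F v u := by
  classical simp [comp]

lemma self_mem_comp {F : Finset (Idx n)} (v : Fin n) : v ∈ comp F v :=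
  mem_comp.mpr Relation.ReflTransGen.refl

lemma comp_eq_of_reach {F : Finset (Idx n)} {v u : Fin n} (h : Reach F v u) :
    comp F v = comp F u := by
  ext w
  simp only [mem_comp]
  exact ⟨fun hw => h.symm.trans hw, fun hw => h.trans hw⟩

/-- Root of a component: the minimum vertex. -/
noncomputable def rootOf (F : Finset (Idx n)) (v : Fin n) : Fin n :=
  (comp F v).min' ⟨v, self_mem_comp v⟩

lemma min'_congr {α : Type*} [LinearOrder α] {s t : Finset α} (h : s = t) (hs : s.Nonempty) :
    s.min' hs = t.min' (h ▸ hs) := by subst h; rfl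

lemma rootOf_eq_of_reach {F : Finset (Idx n)} {v u : Fin n} (h : Reach F v u) :
    rootOf F v = rootOf F u := by
  unfold rootOf
  exact min'_congr (comp_eq_of_reach h) _

lemma rootOf_mem_comp {F : Finset (Idx n)} (v : Fin n) : rootOf F v ∈ comp F v :=
  Finset.min'_mem _ _

lemma reach_rootOf {F : Finset (Idx n)} (v : Fin n) : Reach F v (rootOf F v) :=
  mem_comp.mp (rootOf_mem_comp v)

open Classical in
/-- The canonical (star-forest) monomial attached to a forest. -/
noncomputable def canonProd (F : Finset (Idx n)) : MvPolynomial (Idx n) ℂ :=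
  ∏ v ∈ (vertexSet F).filter (fun v => rootOf F v ≠ v), XE (rootOf F v) v

end Graph

/-! ### Main lemma -/

lemma forest_cong_canon {n m : ℕ} (F : Finset (Idx n)) (hF : IsForest F) :
    Cong n m (∏ S ∈ F, X S) (canonProd F) := by
  classical
  induction F using Finset.strongInduction with
  | _ F ih =>
  rcases Finset.eq_empty_or_nonempty F with rfl | ⟨S₀, hS₀⟩
  · apply Cong.of_eq
    simp [canonProd, vertexSet]
  · obtain ⟨a, b, hab, hSab⟩ := Finset.card_eq_two.mp S₀.2
    set F' := F.erase S₀ with hF'def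
    have hsub : F' ⊂ F := Finset.erase_ssubset hS₀
    have hF' : IsForest F' := by
      intro S hS i hi j hj hij hreach
      exact hF S (Finset.mem_of_mem_erase hS) i hi j hj hij
        (Reach.mono (Finset.erase_subset_erase _ (Finset.erase_subset _ _)) hreach)
    have IH := ih F' hsub hF'
    have haS : a ∈ S₀.1 := by rw [hSab]; simp
    have hbS : b ∈ S₀.1 := by rw [hSab]; simp
    have hbridge : ¬ Reach F' a b := hF S₀ hS₀ a haS b hbS hab
    have hXS : (X S₀ : MvPolynomial (Idx n) ℂ) = XE a b := by
      unfold XE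
      rw [dif_pos hab]
      congr 1
      exact Subtype.ext hSab
    have hRab : Reach F a b := Relation.ReflTransGen.single ⟨S₀, hS₀, haS, hbS, hab⟩
    -- the key reachability facts
    have key : ∀ v u : Fin n, Reach F v u ↔
        Reach F' v u ∨ (Reach F' v a ∧ Reach F' b u) ∨ (Reach F' v b ∧ Reach F' a u) := by
      intro v u
      constructor
      · exact fun h => reach_erase_split hS₀ hab hSab h
      · rintro (h | ⟨h1, h2⟩ | ⟨h1, h2⟩)
        · exact h.mono (Finset.erase_subset _ _)
        · exact ((h1.mono (Finset.erase_subset _ _)).trans hRab).trans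
            (h2.mono (Finset.erase_subset _ _))
        · exact ((h1.mono (Finset.erase_subset _ _)).trans hRab.symm).trans
            (h2.mono (Finset.erase_subset _ _))
    set A := comp F' a with hAdef
    set B := comp F' b with hBdef
    set C := comp F a with hCdef
    have hdisj : Disjoint A B := by
      rw [Finset.disjoint_left]
      intro u huA huB
      exact hbridge ((mem_comp.mp huA).trans (mem_comp.mp huB).symm)
    have hC : C = A ∪ B := by
      ext u
      simp only [hCdef, hAdef, hBdef, mem_comp, Finset.mem_union]
      rw [key a u]
      constructor
      · rintro (h | ⟨h1, h2⟩ | ⟨h1, h2⟩)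
        · exact Or.inl h
        · exact Or.inr h2
        · exact absurd h1 hbridge
      · rintro (h | h)
        · exact Or.inl h
        · exact Or.inr (Or.inl ⟨Relation.ReflTransGen.refl, h⟩)
    have haA : a ∈ A := self_mem_comp a
    have hbB : b ∈ B := self_mem_comp b
    have haC : a ∈ C := self_mem_comp a
    have hbC : b ∈ C := mem_comp.mpr hRab
    -- roots
    have hrootC : ∀ v ∈ C, rootOf F v = rootOf F a :=
      fun v hv => (rootOf_eq_of_reach (mem_comp.mp hv)).symm
    have hrootA : ∀ v ∈ A, rootOf F' v = rootOf F' a :=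
      fun v hv => (rootOf_eq_of_reach (mem_comp.mp hv)).symm
    have hrootB : ∀ v ∈ B, rootOf F' v = rootOf F' b :=
      fun v hv => (rootOf_eq_of_reach (mem_comp.mp hv)).symm
    -- outside C, everything agrees
    have hreach_out : ∀ v, v ∉ C → ∀ u, Reach F v u ↔ Reach F' v u := by
      intro v hvC u
      have hva : ¬ Reach F v a := fun h => hvC (mem_comp.mpr h.symm)
      constructor
      · intro h
        rcases (key v u).mp h with h | ⟨h1, h2⟩ | ⟨h1, h2⟩
        · exact h
        · exact absurd (h1.mono (Finset.erase_subset _ _)) hva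
        · exact absurd ((h1.mono (Finset.erase_subset _ _)).trans hRab.symm) hva
      · exact fun h => h.mono (Finset.erase_subset _ _)
    have hcomp_out : ∀ v, v ∉ C → comp F v = comp F' v := by
      intro v hvC
      ext u
      simp only [mem_comp]
      exact hreach_out v hvC u
    have hroot_out : ∀ v, v ∉ C → rootOf F v = rootOf F' v := by
      intro v hvC
      unfold rootOf
      exact min'_congr (hcomp_out v hvC) _
    -- vertex set facts
    have hCsubVS : ∀ v ∈ C, v ∈ vertexSet F := by
      intro v hv
      by_cases hva : v = a
      · exact hva ▸ mem_vertexSet_of_edge hS₀ haS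
      · exact mem_vertexSet_iff.mpr ⟨a, fun h => hva h.symm, (mem_comp.mp hv).symm⟩
    have hVS'sub : vertexSet F' ⊆ vertexSet F := by
      intro v hv
      obtain ⟨u, huv, h⟩ := mem_vertexSet_iff.mp hv
      exact mem_vertexSet_iff.mpr ⟨u, huv, h.mono (Finset.erase_subset _ _)⟩
    have hVS_out : ∀ v, v ∉ C → (v ∈ vertexSet F ↔ v ∈ vertexSet F') := by
      intro v hvC
      rw [mem_vertexSet_iff, mem_vertexSet_iff]
      constructor
      · rintro ⟨u, huv, h⟩
        exact ⟨u, huv, (hreach_out v hvC u).mp h⟩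
      · rintro ⟨u, huv, h⟩
        exact ⟨u, huv, h.mono (Finset.erase_subset _ _)⟩
    have hAsubVS' : ∀ v ∈ A, v ≠ rootOf F' a → v ∈ vertexSet F' := by
      intro v hv hne
      refine mem_vertexSet_iff.mpr ⟨rootOf F' v, ?_, reach_rootOf v⟩
      rw [hrootA v hv]
      exact fun h => hne h.symm
    have hBsubVS' : ∀ v ∈ B, v ≠ rootOf F' b → v ∈ vertexSet F' := by
      intro v hv hne
      refine mem_vertexSet_iff.mpr ⟨rootOf F' v, ?_, reach_rootOf v⟩
      rw [hrootB v hv]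
      exact fun h => hne h.symm
    -- abbreviations for roots
    set rC := rootOf F a with hrCdef
    set rA := rootOf F' a with hrAdef
    set rB := rootOf F' b with hrBdef
    have hrCC : rC ∈ C := rootOf_mem_comp a
    have hrAA : rA ∈ A := rootOf_mem_comp a
    have hrBB : rB ∈ B := rootOf_mem_comp b
    -- the split of the two canonical products
    have split1 : canonProd F =
        (∏ v ∈ C.erase rC, XE rC v) *
          ∏ v ∈ ((vertexSet F).filter (fun v => rootOf F v ≠ v)).filter (fun v => v ∉ C),
            XE (rootOf F v) v := by
      unfold canonProd
      rw [← Finset.prod_filter_mul_prod_filter_not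
        ((vertexSet F).filter (fun v => rootOf F v ≠ v)) (fun v => v ∈ C)]
      congr 1
      have hset : ((vertexSet F).filter (fun v => rootOf F v ≠ v)).filter (fun v => v ∈ C)
          = C.erase rC := by
        ext v
        simp only [Finset.mem_filter, Finset.mem_erase]
        constructor
        · rintro ⟨⟨hvVS, hr⟩, hvC⟩
          exact ⟨fun h => hr ((hrootC v hvC).trans h.symm), hvC⟩
        · rintro ⟨hvr, hvC⟩
          exact ⟨⟨hCsubVS v hvC, by rw [hrootC v hvC]; exact fun h => hvr h.symm⟩, hvC⟩
      rw [hset]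
      exact Finset.prod_congr rfl fun v hv => by
        rw [hrootC v (Finset.mem_of_mem_erase hv)]
    have split2 : canonProd F' =
        ((∏ v ∈ A.erase rA, XE rA v) * ∏ v ∈ B.erase rB, XE rB v) *
          ∏ v ∈ ((vertexSet F).filter (fun v => rootOf F v ≠ v)).filter (fun v => v ∉ C),
            XE (rootOf F v) v := by
      unfold canonProd
      rw [← Finset.prod_filter_mul_prod_filter_not
        ((vertexSet F').filter (fun v => rootOf F' v ≠ v)) (fun v => v ∈ C)]
      congr 1
      · have hset : ((vertexSet F').filter (fun v => rootOf F' v ≠ v)).filter (fun v => v ∈ C)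
            = A.erase rA ∪ B.erase rB := by
          ext v
          simp only [Finset.mem_filter, Finset.mem_union, Finset.mem_erase]
          constructor
          · rintro ⟨⟨hvVS, hr⟩, hvC⟩
            rw [hC] at hvC
            rcases Finset.mem_union.mp hvC with hvA | hvB
            · exact Or.inl ⟨fun h => hr ((hrootA v hvA).trans h.symm), hvA⟩
            · exact Or.inr ⟨fun h => hr ((hrootB v hvB).trans h.symm), hvB⟩
          · rintro (⟨hne, hvA⟩ | ⟨hne, hvB⟩)
            · refine ⟨⟨hAsubVS' v hvA hne, ?_⟩, ?_⟩
              · rw [hrootA v hvA]; exact fun h => hne h.symm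
              · rw [hC]; exact Finset.mem_union_left _ hvA
            · refine ⟨⟨hBsubVS' v hvB hne, ?_⟩, ?_⟩
              · rw [hrootB v hvB]; exact fun h => hne h.symm
              · rw [hC]; exact Finset.mem_union_right _ hvB
        have hd2 : Disjoint (A.erase rA) (B.erase rB) :=
          (hdisj.mono_left (Finset.erase_subset _ _)).mono_right (Finset.erase_subset _ _)
        rw [hset, Finset.prod_union hd2]
        congr 1
        · exact Finset.prod_congr rfl fun v hv => by
            rw [hrootA v (Finset.mem_of_mem_erase hv)]
        · exact Finset.prod_congr rfl fun v hv => by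
            rw [hrootB v (Finset.mem_of_mem_erase hv)]
      · have hset : ((vertexSet F').filter (fun v => rootOf F' v ≠ v)).filter (fun v => v ∉ C)
            = ((vertexSet F).filter (fun v => rootOf F v ≠ v)).filter (fun v => v ∉ C) := by
          ext v
          simp only [Finset.mem_filter]
          constructor
          · rintro ⟨⟨hvVS, hr⟩, hvC⟩
            exact ⟨⟨(hVS_out v hvC).mpr hvVS, by rwa [hroot_out v hvC]⟩, hvC⟩
          · rintro ⟨⟨hvVS, hr⟩, hvC⟩
            exact ⟨⟨(hVS_out v hvC).mp hvVS, by rwa [← hroot_out v hvC]⟩, hvC⟩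
        rw [hset]
        exact Finset.prod_congr rfl fun v hv => by
          rw [hroot_out v (Finset.mem_filter.mp hv).2]
    -- assemble
    have hprodF : ∏ S ∈ F, X S = XE a b * ∏ S ∈ F', X S := by
      rw [← Finset.mul_prod_erase F _ hS₀, hXS]
    have hAne : A.Nonempty := ⟨a, haA⟩
    have hBne : B.Nonempty := ⟨b, hbB⟩
    have hrAmin : rA = A.min' hAne := rfl
    have hrBmin : rB = B.min' hBne := rfl
    have hrCmin : rC = (A ∪ B).min' (hAne.mono Finset.subset_union_left) := by
      have h1 : rC = C.min' ⟨a, haC⟩ := rfl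
      rw [h1]
      exact min'_congr hC _
    set Out := ∏ v ∈ ((vertexSet F).filter (fun v => rootOf F v ≠ v)).filter (fun v => v ∉ C),
      XE (rootOf F v) v with hOutdef
    have hsm := (star_merge (m := m) A B hAne hBne hdisj a haA b hbB).mul_right Out
    have step2 : Cong n m (XE a b * canonProd F') (canonProd F) := by
      rw [split1, split2]
      have e1 : XE a b * (((∏ v ∈ A.erase rA, XE rA v) * ∏ v ∈ B.erase rB, XE rB v) * Out)
          = XE a b * ((∏ v ∈ A.erase (A.min' hAne), XE (A.min' hAne) v) *
              ∏ v ∈ B.erase (B.min' hBne), XE (B.min' hBne) v) * Out := by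
        rw [← hrAmin, ← hrBmin]; ring
      have e2 : (∏ v ∈ C.erase rC, XE rC v) * Out
          = (∏ v ∈ (A ∪ B).erase ((A ∪ B).min' (hAne.mono Finset.subset_union_left)),
              XE ((A ∪ B).min' (hAne.mono Finset.subset_union_left)) v) * Out := by
        rw [← hrCmin, ← hC]
      rw [e1, e2]
      exact hsm
    have step1 : Cong n m (XE a b * ∏ S ∈ F', X S) (XE a b * canonProd F') :=
      IH.mul_left (XE a b)
    rw [hprodF]
    exact step1.trans step2

theorem stmt16 (n m : ℕ) (hn : 1 ≤ n) (hm : 1 ≤ m)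
    (F₁ F₂ : Finset (Idx n)) (hF₁ : IsForest F₁) (hF₂ : IsForest F₂)
    -- `F₁` and `F₂` induce the same partition of `[n]` into connected components
    (hsame : ∀ i j : Fin n,
      Relation.ReflTransGen (edgeRel F₁) i j ↔ Relation.ReflTransGen (edgeRel F₂) i j) :
    (∏ S ∈ F₁, (X S : MvPolynomial (Idx n) ℂ)) - ∏ S ∈ F₂, X S ∈ idealInm n m := by
  classical
  have hcomp : ∀ v, comp F₁ v = comp F₂ v := by
    intro v
    ext u
    simp only [mem_comp]
    exact hsame v u
  have hroot : ∀ v, rootOf F₁ v = rootOf F₂ v := by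
    intro v
    unfold rootOf
    exact min'_congr (hcomp v) _
  have hVS : vertexSet F₁ = vertexSet F₂ := by
    ext v
    rw [mem_vertexSet_iff, mem_vertexSet_iff]
    constructor
    · rintro ⟨u, h1, h2⟩
      exact ⟨u, h1, (hsame v u).mp h2⟩
    · rintro ⟨u, h1, h2⟩
      exact ⟨u, h1, (hsame v u).mpr h2⟩
  have hcanon : canonProd F₁ = canonProd F₂ := by
    unfold canonProd
    rw [hVS]
    refine Finset.prod_congr (Finset.filter_congr fun v _ => by rw [hroot v]) fun v _ => by
      rw [hroot v]
  have h1 := forest_cong_canon (m := m) F₁ hF₁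
  have h2 := forest_cong_canon (m := m) F₂ hF₂
  have h2' : Cong n m (canonProd F₁) (∏ S ∈ F₂, X S) := by
    rw [hcanon]; exact h2.symm
  exact h1.trans h2'
end

section
/- With $I_{n,m}$ as above (generated by all $x_S^2$, all $x_{\{i,j\}}x_{\{j,k\}}-x_{\{i,k\}}x_{\{j,k\}}$, and all tree monomials on $m+1$ vertices), for any cycle $C$ on distinct vertices $i_1,\dots,i_c$ in $[n]$ (with $c\ge 3$), the monomial $x_{\{i_1,i_2\}}x_{\{i_2,i_3\}}\cdots x_{\{i_{c-1},i_c\}}x_{\{i_c,i_1\}}$ lies in $I_{n,m}$. -/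
open MvPolynomial

/-!
The edge-moving relation `x_{ij} x_{jk} ≡ x_{ik} x_{jk}` holds modulo `I_{n,m}` for all
triples `i, j, k`: when two of them coincide it degenerates to `0` or to a square. Along a closed
walk `w₀ w₁ ⋯ w_t w₀` it replaces `x_{w_{t-1} w_t} x_{w_t w₀}` by `x_{w_{t-1} w₀} x_{w_t w₀}`, which
shortens the walk by one step while keeping a factor; after `t - 1` steps a square
`x_{w₀ w₁} x_{w₁ w₀}` remains.
-/

open Finset Fin.NatCast

lemma XE_self {n : ℕ} (i : Fin n) : XE i i = 0 := by
  simp [XE]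

lemma XE_comm {n : ℕ} (i j : Fin n) : XE i j = XE j i := by
  rcases eq_or_ne i j with rfl | h
  · rfl
  · simp only [XE, dif_pos h, dif_pos h.symm, pair_comm]

lemma XE_sq_mem_idealInm {n : ℕ} (m : ℕ) (i j : Fin n) : XE i j ^ 2 ∈ idealInm n m := by
  rcases eq_or_ne i j with rfl | h
  · simp [XE_self]
  · exact Ideal.subset_span (Or.inl (Or.inl ⟨⟨{i, j}, card_pair h⟩, by simp [XE, h]⟩))

lemma XE_mul_sub_mem_idealInm {n : ℕ} (m : ℕ) (i j k : Fin n) :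
    XE i j * XE j k - XE i k * XE j k ∈ idealInm n m := by
  by_cases hij : i = j
  · subst hij
    simpa [XE_self, sq] using neg_mem (XE_sq_mem_idealInm m i k)
  by_cases hjk : j = k
  · simp [hjk, XE_self]
  by_cases hik : i = k
  · subst hik
    simpa [XE_self, XE_comm j i, sq] using XE_sq_mem_idealInm m i j
  exact Ideal.subset_span (Or.inl (Or.inr ⟨i, j, k, hij, hjk, hik, rfl⟩))

lemma prod_walk_mul_XE_mem_idealInm {n : ℕ} (m : ℕ) (w : ℕ → Fin n) (t : ℕ) :
    (∏ k ∈ range t, XE (w k) (w (k + 1))) * XE (w t) (w 0) ∈ idealInm n m := by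
  induction t with
  | zero => simp [XE_self]
  | succ t ih =>
    set A := ∏ k ∈ range t, XE (w k) (w (k + 1))
    have hmove : A * XE (w t) (w (t + 1)) * XE (w (t + 1)) (w 0) =
        A * (XE (w t) (w (t + 1)) * XE (w (t + 1)) (w 0) - XE (w t) (w 0) * XE (w (t + 1)) (w 0))
          + A * XE (w t) (w 0) * XE (w (t + 1)) (w 0) := by ring
    rw [prod_range_succ, hmove]
    exact add_mem (Ideal.mul_mem_left _ _ (XE_mul_sub_mem_idealInm m _ _ _))
      (Ideal.mul_mem_right _ _ ih)

lemma prod_cycle_mem_idealInm {n : ℕ} (m d : ℕ) (v : Fin (d + 1) → Fin n) :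
    (∏ k : Fin (d + 1), XE (v k) (v (k + 1))) ∈ idealInm n m := by
  let w : ℕ → Fin n := fun k => v (k : Fin (d + 1))
  have hcycle : ∏ k : Fin (d + 1), XE (v k) (v (k + 1)) =
      ∏ k ∈ range (d + 1), XE (w k) (w (k + 1)) := by
    rw [← Fin.prod_univ_eq_prod_range]
    simp [w]
  rw [hcycle, prod_range_succ, show w (d + 1) = w 0 by simp [w]]
  exact prod_walk_mul_XE_mem_idealInm m w d

theorem stmt17 (n m c : ℕ) (hc : 3 ≤ c)
    (v : Fin c → Fin n) :
    (∏ k : Fin c, XE (v k) (v (k + ⟨1, by omega⟩))) ∈ idealInm n m := by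
  obtain ⟨d, rfl⟩ : ∃ d, c = d + 1 := ⟨c - 1, by omega⟩
  have hone : (⟨1, by omega⟩ : Fin (d + 1)) = 1 := Fin.ext (Nat.mod_eq_of_lt (by omega)).symm
  rw [hone]
  exact prod_cycle_mem_idealInm m d v
end

section
/- Let $n,m\ge 1$ and let $\Pi_{n,m}$ be the set of set partitions of $[n]$ with all blocks of size at most $m$. Fix a monomial order $<$ on $\mathbb{C}[x_S : S\in\binom{[n]}{2}]$ and for each subset $B\subseteq[n]$ with $|B|\ge 1$ let $T_B$ be the tree on vertex set $B$ whose edge monomial $\mathfrak{m}(T_B)=\prod_{e\in E(T_B)}x_e$ is minimal among all trees on $B$. Then the set of monomials $\{\prod_{B\in\pi}\mathfrak{m}(T_B) : \pi\in\Pi_{n,m}\}$ is the standard monomial basis of $\mathbb{C}[x_S]/I_{n,m}$, where $I_{n,m}$ is generated by all $x_S^2$, all $x_{\{i,j\}}x_{\{j,k\}}-x_{\{i,k\}}x_{\{j,k\}}$, and all tree monomials on $m+1$ vertices. In particular these monomials descend to a vector space basis of $\mathbb{C}[x_S]/I_{n,m}$, which has dimension $|\Pi_{n,m}|$. -/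
open MvPolynomial

/-- The exponent vector of the squarefree monomial `∏_{S ∈ E} x_S`. -/
noncomputable def expOf {n : ℕ} (E : Finset (Idx n)) : Idx n →₀ ℕ :=
  ∑ S ∈ E, Finsupp.single S 1

/-- `E` is the edge set of a spanning tree of the (complete graph on the) set `B`. -/
def IsSpanningTreeOn {n : ℕ} (B : Finset (Fin n)) (E : Finset (Idx n)) : Prop :=
  (∀ S ∈ E, S.1 ⊆ B) ∧
    (∀ i ∈ B, ∀ j ∈ B, Relation.ReflTransGen (edgeRel E) i j) ∧
    E.card + 1 = B.card

/-- `d` is the exponent of the initial (largest) monomial of `f` with respect to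
the monomial order `mo`. -/
def IsLead {n : ℕ} (mo : (Idx n →₀ ℕ) → (Idx n →₀ ℕ) → Prop)
    (f : MvPolynomial (Idx n) ℂ) (d : Idx n →₀ ℕ) : Prop :=
  d ∈ f.support ∧ ∀ e ∈ f.support, e ≠ d → mo e d

/-- The initial ideal of `I` with respect to `mo`: generated by the initial
monomials of the nonzero elements of `I`. -/
noncomputable def initIdeal {n : ℕ} (mo : (Idx n →₀ ℕ) → (Idx n →₀ ℕ) → Prop)
    (I : Ideal (MvPolynomial (Idx n) ℂ)) : Ideal (MvPolynomial (Idx n) ℂ) :=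
  Ideal.span {g | ∃ f ∈ I, ∃ d, IsLead mo f d ∧ g = monomial d (1 : ℂ)}

/-- A set partition of `[n]` with all blocks of size at most `m`, encoded by its
set of blocks. -/
def IsPartNM (n m : ℕ) (Q : Finset (Finset (Fin n))) : Prop :=
  (∀ B ∈ Q, B.Nonempty ∧ B.card ≤ m) ∧ ∀ i : Fin n, ∃! B, B ∈ Q ∧ i ∈ B

namespace P19
open Finset

variable {n : ℕ}

/-- connectivity relation generated by an edge set -/
def conn (E : Finset (Idx n)) : Fin n → Fin n → Prop := Relation.ReflTransGen (edgeRel E)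

lemma edgeRel_symm {E : Finset (Idx n)} : Symmetric (edgeRel E) := by
  rintro a b ⟨S, hS, h1, h2, h3⟩; exact ⟨S, hS, h2, h1, h3.symm⟩

lemma conn_refl {E : Finset (Idx n)} (i : Fin n) : conn E i i := Relation.ReflTransGen.refl

lemma conn_symm {E : Finset (Idx n)} {i j : Fin n} (h : conn E i j) : conn E j i :=
  by haveI : Std.Symm (edgeRel E) := ⟨fun _ _ h => edgeRel_symm h⟩; exact Relation.ReflTransGen.symmetric.symm _ _ h

lemma conn_trans {E : Finset (Idx n)} {i j k : Fin n} (h : conn E i j) (h' : conn E j k) :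
    conn E i k := Relation.ReflTransGen.trans h h'

lemma edgeRel_mono {E F : Finset (Idx n)} (h : E ⊆ F) {i j : Fin n} (he : edgeRel E i j) :
    edgeRel F i j := by obtain ⟨S, hS, h1⟩ := he; exact ⟨S, h hS, h1⟩

lemma conn_mono {E F : Finset (Idx n)} (h : E ⊆ F) {i j : Fin n} (hc : conn E i j) :
    conn F i j := Relation.ReflTransGen.mono (fun _ _ => edgeRel_mono h) _ _ hc

/-- lift connectivity along a map of edge relations -/
lemma conn_lift {E F : Finset (Idx n)} (h : ∀ p q, edgeRel E p q → conn F p q)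
    {i j : Fin n} (hc : conn E i j) : conn F i j := by
  induction hc with
  | refl => exact conn_refl _
  | tail _ h2 ih => exact conn_trans ih (h _ _ h2)

def mkE (i j : Fin n) (h : i ≠ j) : Idx n := ⟨{i, j}, Finset.card_pair h⟩

lemma mkE_comm (i j : Fin n) (h : i ≠ j) : mkE i j h = mkE j i h.symm := by
  simp [mkE, Finset.pair_comm]

@[simp] lemma mem_mkE {i j a : Fin n} {h : i ≠ j} : a ∈ (mkE i j h).1 ↔ a = i ∨ a = j := by
  simp [mkE]

lemma eq_mkE_of_mem {S : Idx n} {i j : Fin n} (hi : i ∈ S.1) (hj : j ∈ S.1) (hij : i ≠ j) :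
    S = mkE i j hij := by
  apply Subtype.ext
  have hsub : ({i, j} : Finset (Fin n)) ⊆ S.1 := by
    intro a ha; rcases Finset.mem_insert.mp ha with rfl | ha
    · exact hi
    · rw [Finset.mem_singleton] at ha; subst ha; exact hj
  exact (Finset.eq_of_subset_of_card_le hsub (by rw [S.2, Finset.card_pair hij])).symm

lemma edgeRel_iff {E : Finset (Idx n)} {i j : Fin n} :
    edgeRel E i j ↔ ∃ h : i ≠ j, mkE i j h ∈ E := by
  constructor
  · rintro ⟨S, hS, h1, h2, h3⟩
    exact ⟨h3, by rw [← eq_mkE_of_mem h1 h2 h3]; exact hS⟩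
  · rintro ⟨h, hm⟩
    exact ⟨mkE i j h, hm, by simp, by simp, h⟩

lemma ne_of_mkE {i j : Fin n} {h : i ≠ j} {S : Idx n} (hS : S.1 = {i, j}) : S = mkE i j h :=
  Subtype.ext hS

open Classical in
/-- the connected component of `i` (as a subset of all of `Fin n`) -/
noncomputable def classOf (E : Finset (Idx n)) (i : Fin n) : Finset (Fin n) :=
  Finset.univ.filter (conn E i ·)

lemma mem_classOf {E : Finset (Idx n)} {i j : Fin n} : j ∈ classOf E i ↔ conn E i j := by
  simp [classOf]

lemma self_mem_classOf {E : Finset (Idx n)} (i : Fin n) : i ∈ classOf E i :=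
  mem_classOf.mpr (conn_refl i)

lemma classOf_eq_of_conn {E : Finset (Idx n)} {i j : Fin n} (h : conn E i j) :
    classOf E i = classOf E j := by
  ext a; simp only [mem_classOf]
  exact ⟨fun h' => conn_trans (conn_symm h) h', fun h' => conn_trans h h'⟩

lemma conn_of_classOf_eq {E : Finset (Idx n)} {i j : Fin n} (h : classOf E i = classOf E j) :
    conn E i j := by
  have := self_mem_classOf (E := E) j; rw [← h, mem_classOf] at this; exact this

noncomputable def comps (E : Finset (Idx n)) : Finset (Finset (Fin n)) :=
  Finset.univ.image (classOf E)

noncomputable def cnum (E : Finset (Idx n)) : ℕ := (comps E).card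

end P19
namespace P19
open Finset

variable {n : ℕ}

lemma ne_of_pair_eq {S : Idx n} {i j : Fin n} (h : S.1 = {i, j}) : i ≠ j := by
  rintro rfl; have := S.2; rw [h] at this; simp at this

lemma conn_insert_iff {E : Finset (Idx n)} {S : Idx n} {i j : Fin n} (hS : S.1 = {i, j})
    {a b : Fin n} :
    conn (insert S E) a b ↔
      conn E a b ∨ (conn E a i ∧ conn E j b) ∨ (conn E a j ∧ conn E i b) := by
  have hij : i ≠ j := ne_of_pair_eq hS
  constructor
  · intro h
    induction h with
    | refl => exact Or.inl (conn_refl _)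
    | tail _ h2 ih =>
      rename_i c d _
      obtain ⟨S', hS', h1, h2', h3⟩ := h2
      rcases Finset.mem_insert.mp hS' with rfl | hS'E
      · -- the step uses the edge S
        rw [hS] at h1 h2'
        simp only [Finset.mem_insert, Finset.mem_singleton] at h1 h2'
        have hcases : (c = i ∧ d = j) ∨ (c = j ∧ d = i) := by
          rcases h1 with rfl | rfl <;> rcases h2' with rfl | rfl <;> simp_all
        rcases hcases with ⟨rfl, rfl⟩ | ⟨rfl, rfl⟩
        · rcases ih with h' | ⟨h1', h2'⟩ | ⟨h1', h2'⟩
          · exact Or.inr (Or.inl ⟨h', conn_refl _⟩)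
          · exact Or.inr (Or.inl ⟨h1', conn_refl _⟩)
          · exact Or.inl h1'
        · rcases ih with h' | ⟨h1', h2'⟩ | ⟨h1', h2'⟩
          · exact Or.inr (Or.inr ⟨h', conn_refl _⟩)
          · exact Or.inl h1'
          · exact Or.inr (Or.inr ⟨h1', conn_refl _⟩)
      · -- the step uses an edge of E
        have step : conn E c d := Relation.ReflTransGen.single ⟨S', hS'E, h1, h2', h3⟩
        rcases ih with h' | ⟨h1', h2'⟩ | ⟨h1', h2'⟩
        · exact Or.inl (conn_trans h' step)
        · exact Or.inr (Or.inl ⟨h1', conn_trans h2' step⟩)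
        · exact Or.inr (Or.inr ⟨h1', conn_trans h2' step⟩)
  · have hsub : E ⊆ insert S E := Finset.subset_insert _ _
    have hstep : conn (insert S E) i j := by
      refine Relation.ReflTransGen.single ⟨S, Finset.mem_insert_self _ _, ?_, ?_, hij⟩ <;>
        simp [hS]
    rintro (h | ⟨h1, h2⟩ | ⟨h1, h2⟩)
    · exact conn_mono hsub h
    · exact conn_trans (conn_mono hsub h1) (conn_trans hstep (conn_mono hsub h2))
    · exact conn_trans (conn_mono hsub h1)
        (conn_trans (conn_symm hstep) (conn_mono hsub h2))

lemma conn_insert_eq_of_conn {E : Finset (Idx n)} {S : Idx n} {i j : Fin n} (hS : S.1 = {i, j})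
    (hij : conn E i j) {a b : Fin n} : conn (insert S E) a b ↔ conn E a b := by
  rw [conn_insert_iff hS]
  constructor
  · rintro (h | ⟨h1, h2⟩ | ⟨h1, h2⟩)
    · exact h
    · exact conn_trans h1 (conn_trans hij h2)
    · exact conn_trans h1 (conn_trans (conn_symm hij) h2)
  · exact Or.inl

lemma cnum_insert_of_conn {E : Finset (Idx n)} {S : Idx n} {i j : Fin n} (hS : S.1 = {i, j})
    (hij : conn E i j) : cnum (insert S E) = cnum E := by
  have : classOf (insert S E) = classOf E := by
    funext x; ext y; simp only [mem_classOf]; exact conn_insert_eq_of_conn hS hij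
  unfold cnum comps; rw [this]

lemma cnum_insert_of_not_conn {E : Finset (Idx n)} {S : Idx n} {i j : Fin n} (hS : S.1 = {i, j})
    (hij : ¬ conn E i j) : cnum (insert S E) + 1 = cnum E := by
  classical
  have hijne : i ≠ j := ne_of_pair_eq hS
  set Ci := classOf E i with hCi
  set Cj := classOf E j with hCj
  set M := Ci ∪ Cj with hM
  have hiM : i ∈ M := Finset.mem_union_left _ (self_mem_classOf i)
  have hjM : j ∈ M := Finset.mem_union_right _ (self_mem_classOf j)
  have hkey : ∀ x, classOf (insert S E) x =
      if conn E x i ∨ conn E x j then M else classOf E x := by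
    intro x
    split_ifs with hx
    · ext y
      rw [mem_classOf, conn_insert_iff hS]
      rcases hx with hx | hx
      · have hnx : ¬ conn E x j := fun h => hij (conn_trans (conn_symm hx) h)
        constructor
        · rintro (h | ⟨h1, h2⟩ | ⟨h1, h2⟩)
          · exact Finset.mem_union_left _ (mem_classOf.mpr (conn_trans (conn_symm hx) h))
          · exact Finset.mem_union_right _ (mem_classOf.mpr h2)
          · exact absurd h1 hnx
        · intro hy
          rcases Finset.mem_union.mp hy with hy | hy
          · exact Or.inl (conn_trans hx (mem_classOf.mp hy))
          · exact Or.inr (Or.inl ⟨hx, mem_classOf.mp hy⟩)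
      · have hnx : ¬ conn E x i := fun h => hij (conn_symm (conn_trans (conn_symm hx) h))
        constructor
        · rintro (h | ⟨h1, h2⟩ | ⟨h1, h2⟩)
          · exact Finset.mem_union_right _ (mem_classOf.mpr (conn_trans (conn_symm hx) h))
          · exact absurd h1 hnx
          · exact Finset.mem_union_left _ (mem_classOf.mpr h2)
        · intro hy
          rcases Finset.mem_union.mp hy with hy | hy
          · exact Or.inr (Or.inr ⟨hx, mem_classOf.mp hy⟩)
          · exact Or.inl (conn_trans hx (mem_classOf.mp hy))
    · push_neg at hx
      ext y
      rw [mem_classOf, conn_insert_iff hS, mem_classOf]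
      constructor
      · rintro (h | ⟨h1, h2⟩ | ⟨h1, h2⟩)
        · exact h
        · exact absurd h1 hx.1
        · exact absurd h1 hx.2
      · exact Or.inl
  have hMnotE : M ∉ comps E := by
    intro hMem
    obtain ⟨x, _, hx⟩ := Finset.mem_image.mp hMem
    have hxi : conn E x i := mem_classOf.mp (hx ▸ hiM)
    have hxj : conn E x j := mem_classOf.mp (hx ▸ hjM)
    exact hij (conn_trans (conn_symm hxi) hxj)
  have hcomps : comps (insert S E) = insert M ((comps E).erase Ci |>.erase Cj) := by
    ext C
    simp only [comps, Finset.mem_image, Finset.mem_insert, Finset.mem_erase]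
    constructor
    · rintro ⟨x, _, rfl⟩
      rw [hkey x]
      split_ifs with hx
      · exact Or.inl rfl
      · push_neg at hx
        refine Or.inr ⟨?_, ?_, ⟨x, Finset.mem_univ x, rfl⟩⟩
        · intro hEq; exact hx.2 (conn_of_classOf_eq hEq)
        · intro hEq; exact hx.1 (conn_of_classOf_eq hEq)
    · rintro (rfl | ⟨hne1, hne2, x, _, rfl⟩)
      · refine ⟨i, Finset.mem_univ i, ?_⟩
        rw [hkey i]; simp [conn_refl]
      · refine ⟨x, Finset.mem_univ x, ?_⟩
        rw [hkey x]
        have : ¬ (conn E x i ∨ conn E x j) := by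
          rintro (h | h)
          · exact hne2 (classOf_eq_of_conn h)
          · exact hne1 (classOf_eq_of_conn h)
        simp [this]
  have hCiCj : Ci ≠ Cj := fun h => hij (conn_of_classOf_eq h)
  have hCjmem : Cj ∈ comps E := Finset.mem_image.mpr ⟨j, Finset.mem_univ j, rfl⟩
  have hCimem : Ci ∈ (comps E).erase Cj := Finset.mem_erase.mpr
    ⟨hCiCj, Finset.mem_image.mpr ⟨i, Finset.mem_univ i, rfl⟩⟩
  have hMnot : M ∉ ((comps E).erase Ci |>.erase Cj) := by
    intro h
    exact hMnotE (Finset.mem_of_mem_erase (Finset.mem_of_mem_erase h))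
  have h2 : 2 ≤ (comps E).card := by
    have := Finset.card_le_card (s := {Ci, Cj}) (t := comps E) ?_
    · rwa [Finset.card_pair hCiCj] at this
    · intro C hC
      rcases Finset.mem_insert.mp hC with rfl | hC
      · exact Finset.mem_of_mem_erase hCimem
      · rw [Finset.mem_singleton] at hC; subst hC; exact hCjmem
  have hcard1 : ((comps E).erase Ci |>.erase Cj) = (((comps E).erase Cj).erase Ci) :=
    Finset.erase_right_comm
  have hcard2 : (((comps E).erase Cj).erase Ci).card = (comps E).card - 2 := by
    rw [Finset.card_erase_of_mem hCimem, Finset.card_erase_of_mem hCjmem]; omega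
  have : cnum (insert S E) = (comps E).card - 2 + 1 := by
    rw [cnum, hcomps, Finset.card_insert_of_notMem hMnot, hcard1, hcard2]
  rw [this]
  unfold cnum
  omega
end P19
namespace P19
open Finset

variable {n : ℕ}

lemma conn_empty {i j : Fin n} (h : conn ∅ i j) : i = j := by
  induction h with
  | refl => rfl
  | tail _ h2 ih => obtain ⟨S, hS, -⟩ := h2; simp at hS

@[simp] lemma classOf_empty (i : Fin n) : classOf (∅ : Finset (Idx n)) i = {i} := by
  ext j; simp only [mem_classOf, Finset.mem_singleton]
  exact ⟨fun h => (conn_empty h).symm, by rintro rfl; exact conn_refl _⟩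

lemma cnum_empty : cnum (∅ : Finset (Idx n)) = n := by
  unfold cnum comps
  have : Finset.univ.image (classOf (∅ : Finset (Idx n))) =
      Finset.univ.image (fun i : Fin n => ({i} : Finset (Fin n))) := by
    apply Finset.image_congr; intro i _; simp
  rw [this, Finset.card_image_of_injective _ (fun a b h => Finset.singleton_injective h),
    Finset.card_univ, Fintype.card_fin]

/-- every edge has two distinct endpoints, giving a canonical pair up to order -/
lemma exists_pair (S : Idx n) : ∃ i j : Fin n, i ≠ j ∧ S.1 = {i, j} := by
  obtain ⟨i, j, hij, h⟩ := Finset.card_eq_two.mp S.2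
  exact ⟨i, j, hij, h⟩

lemma cnum_add_card_ge (E : Finset (Idx n)) : n ≤ cnum E + E.card := by
  classical
  induction E using Finset.induction_on with
  | empty => simp [cnum_empty]
  | insert _ _ hnot =>
    rename_i S E ih
    obtain ⟨i, j, hij, hS⟩ := exists_pair S
    rw [Finset.card_insert_of_notMem hnot]
    by_cases hc : conn E i j
    · rw [cnum_insert_of_conn hS hc]; omega
    · have := cnum_insert_of_not_conn hS hc; omega

/-- an edge set is acyclic if no edge's endpoints are connected after deleting the edge -/
def Acyclic (E : Finset (Idx n)) : Prop :=
  ∀ S ∈ E, ∀ i j : Fin n, i ∈ S.1 → j ∈ S.1 → i ≠ j → ¬ conn (E.erase S) i j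

lemma Acyclic.mono {E F : Finset (Idx n)} (h : F ⊆ E) (hE : Acyclic E) : Acyclic F := by
  intro S hS i j hi hj hij hc
  exact hE S (h hS) i j hi hj hij (conn_mono (Finset.erase_subset_erase _ h) hc)

lemma Acyclic.cnum_add_card {E : Finset (Idx n)} (hE : Acyclic E) : cnum E + E.card = n := by
  classical
  induction E using Finset.strongInduction with
  | _ E ih =>
    rcases Finset.eq_empty_or_nonempty E with rfl | ⟨S, hS⟩
    · simp [cnum_empty]
    · obtain ⟨i, j, hij, hSp⟩ := exists_pair S
      have hnc : ¬ conn (E.erase S) i j :=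
        hE S hS i j (by simp [hSp]) (by simp [hSp]) hij
      have hins : insert S (E.erase S) = E := Finset.insert_erase hS
      have h1 : cnum E + 1 = cnum (E.erase S) := by
        conv_lhs => rw [← hins]
        exact cnum_insert_of_not_conn hSp hnc
      have h2 : cnum (E.erase S) + (E.erase S).card = n :=
        ih (E.erase S) (Finset.erase_ssubset hS) (hE.mono (Finset.erase_subset _ _))
      have h3 : (E.erase S).card + 1 = E.card := by
        rw [Finset.card_erase_of_mem hS]
        have : 1 ≤ E.card := Finset.card_pos.mpr ⟨S, hS⟩
        omega
      omega

lemma acyclic_of_cnum {E : Finset (Idx n)} (h : cnum E + E.card = n) : Acyclic E := by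
  classical
  intro S hS i j hi hj hij hc
  have hSp : S.1 = {i, j} := by
    have := eq_mkE_of_mem hi hj hij; rw [this]; rfl
  have hins : insert S (E.erase S) = E := Finset.insert_erase hS
  have h1 : cnum E = cnum (E.erase S) := by
    conv_lhs => rw [← hins]
    exact cnum_insert_of_conn hSp hc
  have h2 := cnum_add_card_ge (E.erase S)
  have h3 : (E.erase S).card + 1 = E.card := by
    rw [Finset.card_erase_of_mem hS]
    have : 1 ≤ E.card := Finset.card_pos.mpr ⟨S, hS⟩
    omega
  omega

end P19
namespace P19
open Finset

variable {n : ℕ}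

/-- the edges of `E` lying inside `B` -/
noncomputable def compEdges (E : Finset (Idx n)) (B : Finset (Fin n)) : Finset (Idx n) :=
  open Classical in E.filter (fun S => S.1 ⊆ B)

lemma mem_compEdges {E : Finset (Idx n)} {B : Finset (Fin n)} {S : Idx n} :
    S ∈ compEdges E B ↔ S ∈ E ∧ S.1 ⊆ B := by
  classical
  simp [compEdges]

lemma compEdges_subset (E : Finset (Idx n)) (B : Finset (Fin n)) : compEdges E B ⊆ E := by
  intro S hS; exact (mem_compEdges.mp hS).1

lemma class_closed {E : Finset (Idx n)} {i : Fin n} {S : Idx n} (hS : S ∈ E) {a : Fin n}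
    (ha : a ∈ S.1) (hai : a ∈ classOf E i) : S.1 ⊆ classOf E i := by
  intro b hb
  rw [mem_classOf] at hai ⊢
  by_cases hab : a = b
  · subst hab; exact hai
  · exact conn_trans hai (Relation.ReflTransGen.single ⟨S, hS, ha, hb, hab⟩)

lemma conn_restrict {E : Finset (Idx n)} {i a b : Fin n} (ha : a ∈ classOf E i)
    (h : conn E a b) : conn (compEdges E (classOf E i)) a b := by
  induction h with
  | refl => exact conn_refl _
  | tail h1 h2 ih =>
    rename_i c d
    obtain ⟨S, hS, hc, hd, hcd⟩ := h2
    have hcB : c ∈ classOf E i := mem_classOf.mpr (conn_trans (mem_classOf.mp ha) h1)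
    have hsub : S.1 ⊆ classOf E i := class_closed hS hc hcB
    exact conn_trans ih (Relation.ReflTransGen.single
      ⟨S, mem_compEdges.mpr ⟨hS, hsub⟩, hc, hd, hcd⟩)

lemma mem_vertexSet_iff {E : Finset (Idx n)} {v : Fin n} :
    v ∈ vertexSet E ↔ ∃ S ∈ E, v ∈ S.1 := by
  simp [vertexSet, Finset.mem_sup]

lemma conn_exists_edge {E : Finset (Idx n)} {v w : Fin n} (h : conn E v w) (hvw : v ≠ w) :
    ∃ S ∈ E, v ∈ S.1 := by
  induction h using Relation.ReflTransGen.head_induction_on with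
  | refl => exact absurd rfl hvw
  | head h1 _ _ =>
    obtain ⟨S, hS, hmem, _, _⟩ := h1
    exact ⟨S, hS, hmem⟩

lemma mem_comps {E : Finset (Idx n)} {B : Finset (Fin n)} :
    B ∈ comps E ↔ ∃ i, B = classOf E i := by
  simp only [comps, Finset.mem_image]
  constructor
  · rintro ⟨i, -, rfl⟩; exact ⟨i, rfl⟩
  · rintro ⟨i, rfl⟩; exact ⟨i, Finset.mem_univ i, rfl⟩

lemma classOf_compEdges {E : Finset (Idx n)} {i : Fin n} (hcard : 2 ≤ (classOf E i).card)
    (v : Fin n) :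
    classOf (compEdges E (classOf E i)) v = if v ∈ classOf E i then classOf E i else {v} := by
  set B := classOf E i with hB
  split_ifs with hv
  · ext w
    rw [mem_classOf]
    constructor
    · intro h
      have : conn E v w := conn_mono (compEdges_subset E B) h
      rw [mem_classOf] at hv ⊢
      exact conn_trans hv this
    · intro hw
      have h1 : conn E v w := conn_trans (conn_symm (mem_classOf.mp hv)) (mem_classOf.mp hw)
      exact conn_restrict hv h1
  · ext w
    rw [mem_classOf, Finset.mem_singleton]
    constructor
    · intro h
      by_contra hne
      have hne' : v ≠ w := fun hh => hne hh.symm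
      obtain ⟨S, hS, hmem⟩ := conn_exists_edge h hne'
      have := (mem_compEdges.mp hS).2 hmem
      exact hv this
    · rintro rfl; exact conn_refl _

lemma cnum_compEdges {E : Finset (Idx n)} {i : Fin n} (hcard : 2 ≤ (classOf E i).card) :
    cnum (compEdges E (classOf E i)) + (classOf E i).card = 1 + n := by
  classical
  set B := classOf E i with hB
  have hcomps : comps (compEdges E B) = insert B ((Finset.univ \ B).image fun v => {v}) := by
    ext C
    rw [mem_comps]
    simp only [Finset.mem_insert, Finset.mem_image, Finset.mem_sdiff, Finset.mem_univ, true_and]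
    constructor
    · rintro ⟨v, rfl⟩
      rw [classOf_compEdges hcard v]
      split_ifs with hv
      · exact Or.inl rfl
      · exact Or.inr ⟨v, hv, rfl⟩
    · rintro (rfl | ⟨v, hv, rfl⟩)
      · exact ⟨i, by rw [classOf_compEdges hcard i, if_pos (self_mem_classOf i)]⟩
      · exact ⟨v, by rw [classOf_compEdges hcard v, if_neg hv]⟩
  have hBnot : B ∉ (Finset.univ \ B).image fun v : Fin n => ({v} : Finset (Fin n)) := by
    intro h
    obtain ⟨v, -, hv⟩ := Finset.mem_image.mp h
    rw [← hv] at hcard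
    simp at hcard
  have hcard2 : ((Finset.univ \ B).image fun v : Fin n => ({v} : Finset (Fin n))).card
      = n - B.card := by
    rw [Finset.card_image_of_injective _ (fun a b h => Finset.singleton_injective h),
      Finset.card_sdiff_of_subset (Finset.subset_univ B), Finset.card_univ, Fintype.card_fin]
  have hle : B.card ≤ n := by simpa using Finset.card_le_univ B
  rw [cnum, hcomps, Finset.card_insert_of_notMem hBnot, hcard2]
  omega

/-- connected vertex sets have at least `card - 1` edges -/
lemma card_le_of_conn {F : Finset (Idx n)} {B : Finset (Fin n)}
    (h : ∀ a ∈ B, ∀ b ∈ B, conn F a b) : B.card ≤ F.card + 1 := by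
  classical
  rcases le_or_gt B.card 1 with h1 | h1
  · omega
  · obtain ⟨b₀, hb₀⟩ := Finset.card_pos.mp (by omega : 0 < B.card)
    set C := classOf F b₀ with hC
    have hBC : B ⊆ C := fun b hb => mem_classOf.mpr (h b₀ hb₀ b hb)
    have hcard : 2 ≤ C.card := le_trans h1 (Finset.card_le_card hBC)
    have h2 := cnum_compEdges (E := F) (i := b₀) hcard
    rw [← hC] at h2
    have h3 := cnum_add_card_ge (compEdges F C)
    have h4 : (compEdges F C).card ≤ F.card := Finset.card_le_card (compEdges_subset F C)
    have h5 : B.card ≤ C.card := Finset.card_le_card hBC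
    omega

lemma spanningTree_acyclic {B : Finset (Fin n)} {T : Finset (Idx n)}
    (h : IsSpanningTreeOn B T) : Acyclic T := by
  classical
  obtain ⟨hsub, hconn, hcard⟩ := h
  intro S hS i j hi hj hij hc
  have hconn' : ∀ a ∈ B, ∀ b ∈ B, conn (T.erase S) a b := by
    intro a ha b hb
    refine conn_lift ?_ (hconn a ha b hb)
    intro p q hpq
    obtain ⟨S', hS', hp, hq, hpq'⟩ := hpq
    by_cases hSS : S' = S
    · subst hSS
      -- p,q are the endpoints of S, i.e. {p,q} = {i,j}
      have hpS := eq_mkE_of_mem hp hq hpq'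
      have hiS := eq_mkE_of_mem hi hj hij
      have : ({p, q} : Finset (Fin n)) = {i, j} := by
        have h7 : (mkE p q hpq').1 = (mkE i j hij).1 := by rw [← hpS, ← hiS]
        simpa [mkE] using h7
      have hmem : p ∈ ({i, j} : Finset (Fin n)) := by
        rw [← this]; simp
      have hmemq : q ∈ ({i, j} : Finset (Fin n)) := by
        rw [← this]; simp
      simp only [Finset.mem_insert, Finset.mem_singleton] at hmem hmemq
      rcases hmem with rfl | rfl <;> rcases hmemq with rfl | rfl
      · exact absurd rfl hpq'
      · exact hc
      · exact conn_symm hc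
      · exact absurd rfl hpq'
    · exact Relation.ReflTransGen.single ⟨S', Finset.mem_erase.mpr ⟨hSS, hS'⟩, hp, hq, hpq'⟩
  have h6 : B.card ≤ (T.erase S).card + 1 := card_le_of_conn hconn'
  rw [Finset.card_erase_of_mem hS] at h6
  have : 1 ≤ T.card := Finset.card_pos.mpr ⟨S, hS⟩
  omega

/-- in an acyclic graph, each component's edges form a spanning tree of the component -/
lemma spanningTree_of_acyclic {E : Finset (Idx n)} (hE : Acyclic E) (i : Fin n) :
    IsSpanningTreeOn (classOf E i) (compEdges E (classOf E i)) := by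
  classical
  set B := classOf E i with hB
  have hsub : ∀ S ∈ compEdges E B, S.1 ⊆ B := fun S hS => (mem_compEdges.mp hS).2
  have hconn : ∀ a ∈ B, ∀ b ∈ B, conn (compEdges E B) a b := by
    intro a ha b hb
    exact conn_restrict ha (conn_trans (conn_symm (mem_classOf.mp ha)) (mem_classOf.mp hb))
  refine ⟨hsub, hconn, ?_⟩
  rcases le_or_gt 2 B.card with hcard | hcard
  · have h1 := cnum_compEdges (E := E) (i := i) hcard
    rw [← hB] at h1
    have h2 : Acyclic (compEdges E B) := hE.mono (compEdges_subset E B)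
    have h3 := h2.cnum_add_card
    omega
  · have hcard1 : B.card = 1 := by
      have : 0 < B.card := Finset.card_pos.mpr ⟨i, self_mem_classOf i⟩
      omega
    have hempty : compEdges E B = ∅ := by
      rw [Finset.eq_empty_iff_forall_notMem]
      intro S hS
      have h2 := Finset.card_le_card ((mem_compEdges.mp hS).2)
      rw [S.2, hcard1] at h2
      omega
    rw [hempty]
    simp [hcard1]

end P19
namespace P19
open Finset MvPolynomial

variable {n m : ℕ}

lemma expOf_apply (E : Finset (Idx n)) (S : Idx n) :
    expOf E S = if S ∈ E then 1 else 0 := by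
  classical
  rw [expOf, Finset.sum_apply']
  simp [Finsupp.single_apply, eq_comm]

lemma expOf_support (E : Finset (Idx n)) : (expOf E).support = E := by
  ext S
  rw [Finsupp.mem_support_iff, expOf_apply]
  split_ifs with h <;> simp [h]

lemma expOf_eq_of_squarefree {d : Idx n →₀ ℕ} (h : ∀ S, d S ≤ 1) : expOf d.support = d := by
  ext S
  rw [expOf_apply]
  have := h S
  split_ifs with hS
  · rw [Finsupp.mem_support_iff] at hS; omega
  · rw [Finsupp.notMem_support_iff] at hS; omega

lemma expOf_union_disjoint {E F : Finset (Idx n)} (h : Disjoint E F) :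
    expOf (E ∪ F) = expOf E + expOf F := by
  classical
  rw [expOf, expOf, expOf, Finset.sum_union h]

lemma expOf_sdiff_add {E F : Finset (Idx n)} (h : F ⊆ E) :
    expOf F + expOf (E \ F) = expOf E := by
  classical
  rw [← expOf_union_disjoint (Finset.disjoint_sdiff), Finset.union_sdiff_of_subset h]

lemma prod_X_eq_monomial (E : Finset (Idx n)) :
    (∏ S ∈ E, (X S : MvPolynomial (Idx n) ℂ)) = monomial (expOf E) 1 := by
  classical
  induction E using Finset.induction_on with
  | empty => simp [expOf]
  | insert _ _ hnot =>
    rename_i S E ih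
    rw [Finset.prod_insert hnot, ih, X, monomial_mul, one_mul]
    congr 1
    rw [expOf, expOf, Finset.sum_insert hnot]

lemma monomial_expOf_add (E : Finset (Idx n)) (d : Idx n →₀ ℕ) (c : ℂ) :
    monomial (expOf E + d) c = (∏ S ∈ E, (X S : MvPolynomial (Idx n) ℂ)) * monomial d c := by
  rw [prod_X_eq_monomial, monomial_mul, one_mul]

lemma sq_mem (S : Idx n) : (X S : MvPolynomial (Idx n) ℂ) ^ 2 ∈ idealInm n m :=
  Ideal.subset_span (Or.inl (Or.inl ⟨S, rfl⟩))

lemma binom_mem {i j k : Fin n} (hij : i ≠ j) (hjk : j ≠ k) (hik : i ≠ k) :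
    (XE i j * XE j k - XE i k * XE j k : MvPolynomial (Idx n) ℂ) ∈ idealInm n m :=
  Ideal.subset_span (Or.inl (Or.inr ⟨i, j, k, hij, hjk, hik, rfl⟩))

lemma tree_mem {E : Finset (Idx n)} (hE : IsTreeOn E) (hcard : (vertexSet E).card = m + 1) :
    (∏ S ∈ E, (X S : MvPolynomial (Idx n) ℂ)) ∈ idealInm n m :=
  Ideal.subset_span (Or.inr ⟨E, hE, hcard, rfl⟩)

lemma XE_eq {i j : Fin n} (h : i ≠ j) : (XE i j : MvPolynomial (Idx n) ℂ) = X (mkE i j h) := by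
  rw [XE, dif_pos h]; rfl

lemma XE_symm (i j : Fin n) : (XE i j : MvPolynomial (Idx n) ℂ) = XE j i := by
  by_cases h : i = j
  · subst h; rfl
  · rw [XE_eq h, XE_eq (Ne.symm h), mkE_comm]

/-- monomials with a square factor lie in the ideal -/
lemma monomial_mem_of_two_le {d : Idx n →₀ ℕ} {S : Idx n} (h : 2 ≤ d S) (c : ℂ) :
    (monomial d c : MvPolynomial (Idx n) ℂ) ∈ idealInm n m := by
  have hle : Finsupp.single S 2 ≤ d := by
    rw [Finsupp.single_le_iff]; exact h
  have hd : Finsupp.single S 2 + (d - Finsupp.single S 2) = d := add_tsub_cancel_of_le hle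
  have : (monomial d c : MvPolynomial (Idx n) ℂ)
      = X S ^ 2 * monomial (d - Finsupp.single S 2) c := by
    rw [X_pow_eq_monomial, monomial_mul, one_mul, hd]
  rw [this]
  exact Ideal.mul_mem_right _ _ (sq_mem S)

/-- monomials divisible by the monomial of a tree with `m+1` vertices lie in the ideal -/
lemma monomial_mem_of_tree_le {d : Idx n →₀ ℕ} {E : Finset (Idx n)} (hE : IsTreeOn E)
    (hcard : (vertexSet E).card = m + 1) (hle : expOf E ≤ d) (c : ℂ) :
    (monomial d c : MvPolynomial (Idx n) ℂ) ∈ idealInm n m := by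
  have hd : expOf E + (d - expOf E) = d := add_tsub_cancel_of_le hle
  rw [← hd, monomial_expOf_add]
  exact Ideal.mul_mem_right _ _ (tree_mem hE hcard)

end P19
namespace P19
open Finset MvPolynomial

variable {n m : ℕ}

lemma expOf_insert {E : Finset (Idx n)} {S : Idx n} (h : S ∉ E) :
    expOf (insert S E) = Finsupp.single S 1 + expOf E := by
  rw [expOf, Finset.sum_insert h, expOf]

def Walk (F : Finset (Idx n)) : Fin n → List (Fin n) → Fin n → Prop
  | a, [], b => a = b
  | a, c :: l, b => edgeRel F a c ∧ Walk F c l b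

lemma Walk.concat {F : Finset (Idx n)} :
    ∀ {l : List (Fin n)} {a c d : Fin n}, Walk F a l c → edgeRel F c d →
      Walk F a (l ++ [d]) d := by
  intro l
  induction l with
  | nil =>
    intro a c d h he
    rw [Walk] at h; subst h
    exact ⟨he, rfl⟩
  | cons x l ih =>
    intro a c d h he
    exact ⟨h.1, ih h.2 he⟩

lemma conn_iff_walk {F : Finset (Idx n)} {a b : Fin n} :
    conn F a b ↔ ∃ l, Walk F a l b := by
  constructor
  · intro h
    induction h with
    | refl => exact ⟨[], rfl⟩
    | tail h1 h2 ih =>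
      obtain ⟨l, hl⟩ := ih
      exact ⟨l ++ [_], Walk.concat hl h2⟩
  · rintro ⟨l, hl⟩
    induction l generalizing a with
    | nil => rw [Walk] at hl; subst hl; exact conn_refl _
    | cons c l ih =>
      obtain ⟨h1, h2⟩ := hl
      exact Relation.ReflTransGen.head h1 (ih h2)

lemma mul_key (A B : Idx n) (e : Idx n →₀ ℕ) :
    (X A : MvPolynomial (Idx n) ℂ) * X B * monomial e 1
      = monomial (Finsupp.single A 1 + (Finsupp.single B 1 + e)) 1 := by
  rw [X, X, monomial_mul, monomial_mul]
  simp [add_assoc]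

lemma cyc_mem (l : List (Fin n)) :
    ∀ (F : Finset (Idx n)) (i j : Fin n) (hij : i ≠ j), mkE i j hij ∈ F →
      Walk (F.erase (mkE i j hij)) i l j →
      (monomial (expOf F) (1 : ℂ) : MvPolynomial (Idx n) ℂ) ∈ idealInm n m := by
  induction l with
  | nil =>
    intro F i j hij _ hw
    rw [Walk] at hw
    exact absurd hw hij
  | cons c l ih =>
    intro F i j hij hS hw
    set S := mkE i j hij with hSdef
    obtain ⟨h1, h2⟩ := hw
    obtain ⟨hic, hT⟩ := edgeRel_iff.mp h1
    set T := mkE i c hic with hTdef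
    have hTS : T ≠ S := (Finset.mem_erase.mp hT).1
    have hTF : T ∈ F := Finset.mem_of_mem_erase hT
    by_cases hcj : c = j
    · exfalso
      apply hTS
      subst hcj
      rfl
    have hjc : j ≠ c := fun h => hcj h.symm
    set U := mkE j c hjc with hUdef
    have hUT : U ≠ T := by
      intro h
      have : j ∈ T.1 := by rw [← h]; simp [hUdef]
      rw [hTdef] at this
      rcases mem_mkE.mp this with h' | h'
      · exact hij h'.symm
      · exact hjc h'
    -- decompose the exponent of F
    set rest := (F.erase S).erase T with hrest
    have e1 : expOf F = Finsupp.single S 1 + expOf (F.erase S) := by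
      conv_lhs => rw [← Finset.insert_erase hS]
      rw [expOf_insert (Finset.notMem_erase _ _)]
    have e2 : expOf (F.erase S) = Finsupp.single T 1 + expOf rest := by
      conv_lhs => rw [← Finset.insert_erase hT]
      rw [expOf_insert (Finset.notMem_erase _ _)]
    set P : MvPolynomial (Idx n) ℂ := monomial (expOf rest) 1 with hP
    have hXS : (XE j i : MvPolynomial (Idx n) ℂ) = X S := by rw [XE_symm, XE_eq hij]
    have hXT : (XE i c : MvPolynomial (Idx n) ℂ) = X T := XE_eq hic
    have hXU : (XE j c : MvPolynomial (Idx n) ℂ) = X U := XE_eq hjc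
    have hA : (monomial (expOf F) (1 : ℂ) : MvPolynomial (Idx n) ℂ) = X S * X T * P := by
      rw [mul_key, ← e2, ← e1]
    have hbin : (XE j i * XE i c - XE j c * XE i c : MvPolynomial (Idx n) ℂ) ∈ idealInm n m :=
      binom_mem (Ne.symm hij) hic hjc
    have hsplit : (monomial (expOf F) (1 : ℂ) : MvPolynomial (Idx n) ℂ)
        = (XE j i * XE i c - XE j c * XE i c) * P + X U * X T * P := by
      rw [hA, hXS, hXT, hXU]; ring
    by_cases hU : U ∈ rest
    · -- the new edge already occurs : square
      have hsq : (X U * X T * P : MvPolynomial (Idx n) ℂ) ∈ idealInm n m := by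
        rw [hP, mul_key]
        have hval : ((Finsupp.single U 1 + (Finsupp.single T 1 + expOf rest) : Idx n →₀ ℕ)) U
            = 2 := by
          rw [Finsupp.add_apply, Finsupp.add_apply, Finsupp.single_apply, Finsupp.single_apply,
            expOf_apply, if_pos rfl, if_neg (fun h : T = U => hUT h.symm), if_pos hU]
          omega
        exact monomial_mem_of_two_le (le_of_eq hval.symm) 1
      rw [hsplit]
      exact Ideal.add_mem _ (Ideal.mul_mem_right _ _ hbin) hsq
    · -- slide the edge S to U and recurse
      have hUF' : U ∉ F.erase S := by
        intro h
        exact hU (Finset.mem_erase.mpr ⟨hUT, h⟩)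
      set F₂ := insert U (F.erase S) with hF₂
      have eF₂ : expOf F₂ = Finsupp.single U 1 + (Finsupp.single T 1 + expOf rest) := by
        rw [hF₂, expOf_insert hUF', e2]
      have hmono : (X U * X T * P : MvPolynomial (Idx n) ℂ) = monomial (expOf F₂) 1 := by
        rw [hP, mul_key, eF₂]
      have hUcj : mkE c j hcj = U := by rw [hUdef, mkE_comm]
      have hmem2 : mkE c j hcj ∈ F₂ := by rw [hUcj]; exact Finset.mem_insert_self _ _
      have herase2 : F₂.erase (mkE c j hcj) = F.erase S := by
        rw [hUcj, hF₂, Finset.erase_insert hUF']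
      have hrec := ih F₂ c j hcj hmem2 (by rw [herase2]; exact h2)
      rw [hsplit, hmono]
      exact Ideal.add_mem _ (Ideal.mul_mem_right _ _ hbin) hrec

lemma not_acyclic_mem {E : Finset (Idx n)} (h : ¬ Acyclic E) :
    (monomial (expOf E) (1 : ℂ) : MvPolynomial (Idx n) ℂ) ∈ idealInm n m := by
  rw [Acyclic] at h
  push_neg at h
  obtain ⟨S, hS, i, j, hi, hj, hij, hc⟩ := h
  have hSm : S = mkE i j hij := eq_mkE_of_mem hi hj hij
  subst hSm
  obtain ⟨l, hl⟩ := conn_iff_walk.mp hc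
  exact cyc_mem l E i j hij hS hl

end P19
namespace P19
open Finset MvPolynomial

variable {n m : ℕ}

lemma cross {F : Finset (Idx n)} {A : Finset (Fin n)} {a b : Fin n} (ha : a ∈ A)
    (hc : conn F a b) (hb : b ∉ A) : ∃ x ∈ A, ∃ y ∉ A, edgeRel F x y := by
  induction hc with
  | refl => exact absurd ha hb
  | tail h1 h2 ih =>
    rename_i c d
    by_cases hcA : c ∈ A
    · exact ⟨c, hcA, d, hb, h2⟩
    · exact ih hcA

lemma conn_isolated {F : Finset (Idx n)} {v a : Fin n} (h : ∀ S ∈ F, v ∉ S.1)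
    (hc : conn F v a) : v = a := by
  induction hc with
  | refl => rfl
  | tail h1 h2 ih =>
    subst ih
    obtain ⟨S, hS, h3, -, -⟩ := h2
    exact absurd h3 (h S hS)

/-- number of edges not containing `r` -/
noncomputable def offCount (r : Fin n) (T : Finset (Idx n)) : ℕ :=
  open Classical in (T.filter (fun S => r ∉ S.1)).card

/-- one slide move decreasing the number of edges missing the root -/
lemma slide_step {B : Finset (Fin n)} {T : Finset (Idx n)} {r : Fin n}
    (hT : IsSpanningTreeOn B T) (hr : r ∈ B) (hoff : 0 < offCount r T) :
    ∃ T₂, IsSpanningTreeOn B T₂ ∧ offCount r T₂ + 1 = offCount r T ∧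
      (monomial (expOf T) (1 : ℂ) : MvPolynomial (Idx n) ℂ) - monomial (expOf T₂) 1
        ∈ idealInm n m := by
  classical
  obtain ⟨hsub, hconn, hcard⟩ := hT
  obtain ⟨S₀, hS₀⟩ : ∃ S₀ ∈ T, r ∉ S₀.1 := by
    rw [offCount] at hoff
    obtain ⟨S₀, hS₀⟩ := Finset.card_pos.mp hoff
    rw [Finset.mem_filter] at hS₀
    exact ⟨S₀, hS₀.1, by simpa using hS₀.2⟩
  set A : Finset (Fin n) := insert r (B.filter (fun v => edgeRel T r v)) with hA
  have hAB : A ⊆ B := by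
    intro v hv
    rcases Finset.mem_insert.mp hv with rfl | hv
    · exact hr
    · exact (Finset.mem_filter.mp hv).1
  have hTpos : 1 ≤ T.card := Finset.card_pos.mpr ⟨S₀, hS₀.1⟩
  -- find a vertex outside A
  have hex : ∃ u ∈ B, u ∉ A := by
    by_contra hno
    push_neg at hno
    have hBA : B = A := Finset.Subset.antisymm hno hAB
    have hch : ∀ v ∈ B.erase r, ∃ S, (S ∈ T.filter (fun S => r ∈ S.1)) ∧ v ∈ S.1 := by
      intro v hv
      obtain ⟨hvr, hvB⟩ := Finset.mem_erase.mp hv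
      have hvA : v ∈ A := hBA ▸ hvB
      rcases Finset.mem_insert.mp hvA with rfl | hvA
      · exact absurd rfl hvr
      · obtain ⟨S, hS, h1, h2, h3⟩ := (Finset.mem_filter.mp hvA).2
        exact ⟨S, Finset.mem_filter.mpr ⟨hS, h1⟩, h2⟩
    choose f hf1 hf2 using hch
    have hinj : ∀ (v : Fin n) (hv : v ∈ B.erase r) (w : Fin n) (hw : w ∈ B.erase r),
        f v hv = f w hw → v = w := by
      intro v hv w hw hfw
      have h1 : v ∈ (f v hv).1 := hf2 v hv
      have h2 : w ∈ (f w hw).1 := hf2 w hw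
      have h3 : r ∈ (f v hv).1 := (Finset.mem_filter.mp (hf1 v hv)).2
      have hvr := (Finset.mem_erase.mp hv).1
      have hwr := (Finset.mem_erase.mp hw).1
      have he : (f v hv) = mkE r v (Ne.symm hvr) := eq_mkE_of_mem h3 h1 (Ne.symm hvr)
      rw [hfw] at he
      have : w ∈ (mkE r v (Ne.symm hvr)).1 := he ▸ h2
      rcases mem_mkE.mp this with h' | h'
      · exact absurd h' hwr
      · exact h'.symm
    have hcount : (B.erase r).card ≤ (T.filter (fun S => r ∈ S.1)).card := by
      classical
      exact Finset.card_le_card_of_injOn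
        (s := B.erase r) (t := T.filter (fun S => r ∈ S.1))
        (fun v => if h : v ∈ B.erase r then f v h else S₀)
        (fun v hv => by
          show (if h : v ∈ B.erase r then f v h else S₀) ∈ _
          rw [dif_pos (Finset.mem_coe.mp hv)]; exact hf1 v hv)
        (fun v hv w hw hvw => by
          simp only [Finset.mem_coe] at hv hw
          have hvw' : f v hv = f w hw := by
            have h1 : (if h : v ∈ B.erase r then f v h else S₀)
                = (if h : w ∈ B.erase r then f w h else S₀) := hvw
            rwa [dif_pos hv, dif_pos hw] at h1
          exact hinj v hv w hw hvw')
    have hfiltlt : (T.filter (fun S => r ∈ S.1)).card + 1 ≤ T.card := by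
      have hsubf : T.filter (fun S => r ∈ S.1) ⊆ T.erase S₀ := by
        intro S hS
        rw [Finset.mem_filter] at hS
        refine Finset.mem_erase.mpr ⟨?_, hS.1⟩
        intro hEq; subst hEq; exact hS₀.2 hS.2
      have := Finset.card_le_card hsubf
      rw [Finset.card_erase_of_mem hS₀.1] at this
      omega
    rw [Finset.card_erase_of_mem hr] at hcount
    have hBpos : 1 ≤ B.card := Finset.card_pos.mpr ⟨r, hr⟩
    omega
  obtain ⟨u, huB, huA⟩ := hex
  -- find a crossing edge
  obtain ⟨x, hxA, y, hyA, hxy⟩ := cross (Finset.mem_insert_self r _) (hconn r hr u huB) huA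
  obtain ⟨W, hW, hxW, hyW, hxyne⟩ := hxy
  have hyB : y ∈ B := hsub W hW hyW
  have hrynotedge : ¬ edgeRel T r y := by
    intro h
    exact hyA (Finset.mem_insert.mpr (Or.inr (Finset.mem_filter.mpr ⟨hyB, h⟩)))
  have hyr : y ≠ r := fun h => hyA (by rw [h]; exact Finset.mem_insert_self r _)
  have hxr : x ≠ r := by
    rintro rfl
    exact hrynotedge ⟨W, hW, hxW, hyW, hxyne⟩
  obtain hxA' : edgeRel T r x := by
    rcases Finset.mem_insert.mp hxA with rfl | h
    · exact absurd rfl hxr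
    · exact (Finset.mem_filter.mp h).2
  obtain ⟨V, hV, hrV, hxV, hrx⟩ := hxA'
  have hW_eq : W = mkE x y hxyne := eq_mkE_of_mem hxW hyW hxyne
  have hV_eq : V = mkE r x (Ne.symm hxr) := eq_mkE_of_mem hrV hxV hrx
  have hrW : r ∉ W.1 := by
    rw [hW_eq]
    intro h
    rcases mem_mkE.mp h with h' | h'
    · exact hxr h'.symm
    · exact hyr h'.symm
  have hVW : V ≠ W := by
    intro h; rw [← h] at hrW; exact hrW hrV
  have hVT' : V ∈ T.erase W := Finset.mem_erase.mpr ⟨hVW, hV⟩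
  set U : Idx n := mkE r y (Ne.symm hyr) with hU_eq
  have hUT : U ∉ T := by
    intro h
    exact hrynotedge ⟨U, h, by simp [hU_eq], by simp [hU_eq], Ne.symm hyr⟩
  have hUT' : U ∉ T.erase W := fun h => hUT (Finset.mem_of_mem_erase h)
  set T₂ := insert U (T.erase W) with hT₂
  have hUV : U ≠ V := by
    intro h
    have : y ∈ V.1 := by rw [← h]; simp [hU_eq]
    rw [hV_eq] at this
    rcases mem_mkE.mp this with h' | h'
    · exact hyr h'
    · exact hxyne h'.symm
  -- exponent decompositions
  set rest := (T.erase W).erase V with hrest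
  have e1 : expOf T = Finsupp.single W 1 + (Finsupp.single V 1 + expOf rest) := by
    conv_lhs => rw [← Finset.insert_erase hW]
    rw [expOf_insert (Finset.notMem_erase _ _)]
    congr 1
    conv_lhs => rw [← Finset.insert_erase hVT']
    rw [expOf_insert (Finset.notMem_erase _ _)]
  have e2 : expOf T₂ = Finsupp.single U 1 + (Finsupp.single V 1 + expOf rest) := by
    rw [hT₂, expOf_insert hUT']
    congr 1
    conv_lhs => rw [← Finset.insert_erase hVT']
    rw [expOf_insert (Finset.notMem_erase _ _)]
  set P : MvPolynomial (Idx n) ℂ := monomial (expOf rest) 1 with hP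
  have hXW : (XE y x : MvPolynomial (Idx n) ℂ) = X W := by
    rw [XE_symm, XE_eq hxyne, ← hW_eq]
  have hXV : (XE x r : MvPolynomial (Idx n) ℂ) = X V := by
    rw [XE_symm, XE_eq (Ne.symm hxr), ← hV_eq]
  have hXU : (XE y r : MvPolynomial (Idx n) ℂ) = X U := by
    rw [XE_symm, XE_eq (Ne.symm hyr)]
  refine ⟨T₂, ⟨?_, ?_, ?_⟩, ?_, ?_⟩
  · -- edges inside B
    intro S hS
    rcases Finset.mem_insert.mp hS with rfl | hS
    · intro a ha
      rcases mem_mkE.mp ha with rfl | rfl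
      · exact hr
      · exact hyB
    · exact hsub S (Finset.mem_of_mem_erase hS)
  · -- connectivity
    intro a ha b hb
    refine conn_lift ?_ (hconn a ha b hb)
    intro p q hpq
    obtain ⟨S', hS', hp, hq, hpq'⟩ := hpq
    by_cases hSS : S' = W
    · subst hSS
      have hxyconn : conn T₂ x y := by
        refine Relation.ReflTransGen.head (b := r) ?_ (Relation.ReflTransGen.single ?_)
        · exact ⟨V, Finset.mem_insert.mpr (Or.inr hVT'), hxV, hrV, hxr⟩
        · exact ⟨U, Finset.mem_insert_self _ _, by simp [hU_eq], by simp [hU_eq], Ne.symm hyr⟩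
      rw [hW_eq] at hp hq
      rcases mem_mkE.mp hp with rfl | rfl <;> rcases mem_mkE.mp hq with rfl | rfl
      · exact absurd rfl hpq'
      · exact hxyconn
      · exact conn_symm hxyconn
      · exact absurd rfl hpq'
    · exact Relation.ReflTransGen.single
        ⟨S', Finset.mem_insert.mpr (Or.inr (Finset.mem_erase.mpr ⟨hSS, hS'⟩)), hp, hq, hpq'⟩
  · -- cardinality
    rw [hT₂, Finset.card_insert_of_notMem hUT', Finset.card_erase_of_mem hW]
    omega
  · -- the measure decreases
    have hfilt : T₂.filter (fun S => r ∉ S.1) = (T.filter (fun S => r ∉ S.1)).erase W := by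
      ext S
      rw [Finset.mem_filter, hT₂, Finset.mem_insert, Finset.mem_erase, Finset.mem_erase,
        Finset.mem_filter]
      constructor
      · rintro ⟨rfl | ⟨hSW, hST⟩, hrS⟩
        · exact absurd (by simp [hU_eq]) hrS
        · exact ⟨hSW, hST, hrS⟩
      · rintro ⟨hSW, hST, hrS⟩
        exact ⟨Or.inr ⟨hSW, hST⟩, hrS⟩
    have hWfilt : W ∈ T.filter (fun S => r ∉ S.1) := Finset.mem_filter.mpr ⟨hW, hrW⟩
    rw [offCount, offCount]
    have h1 : (Finset.filter (fun S => r ∉ S.1) T₂).card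
        = (Finset.filter (fun S => r ∉ S.1) T).card - 1 := by
      rw [hfilt, Finset.card_erase_of_mem hWfilt]
    have h2 : 1 ≤ (Finset.filter (fun S => r ∉ S.1) T).card :=
      Finset.card_pos.mpr ⟨W, hWfilt⟩
    omega
  · -- the congruence
    have hid : (monomial (expOf T) (1 : ℂ) : MvPolynomial (Idx n) ℂ) - monomial (expOf T₂) 1
        = (XE y x * XE x r - XE y r * XE x r) * P := by
      rw [e1, e2, ← mul_key, ← mul_key, hXW, hXV, hXU]
      ring
    rw [hid]
    exact Ideal.mul_mem_right _ _ (binom_mem (Ne.symm hxyne) hxr hyr)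

/-- all spanning trees of the same vertex set have congruent monomials mod the ideal -/
lemma trees_congruent {B : Finset (Fin n)} (hB : B.Nonempty) {T T' : Finset (Idx n)}
    (hT : IsSpanningTreeOn B T) (hT' : IsSpanningTreeOn B T') :
    (monomial (expOf T) (1 : ℂ) : MvPolynomial (Idx n) ℂ) - monomial (expOf T') 1
      ∈ idealInm n m := by
  classical
  obtain ⟨r, hr⟩ := hB
  suffices h : ∀ (k : ℕ) (T T' : Finset (Idx n)), IsSpanningTreeOn B T →
      IsSpanningTreeOn B T' → offCount r T + offCount r T' ≤ k →
      (monomial (expOf T) (1 : ℂ) : MvPolynomial (Idx n) ℂ) - monomial (expOf T') 1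
        ∈ idealInm n m by
    exact h _ T T' hT hT' le_rfl
  intro k
  induction k with
  | zero =>
    intro T T' hT hT' hk
    -- both trees are stars at r, hence equal
    have hTstar : ∀ S ∈ T, r ∈ S.1 := by
      intro S hS
      by_contra hrS
      have : S ∈ T.filter (fun S => r ∉ S.1) := Finset.mem_filter.mpr ⟨hS, hrS⟩
      have := Finset.card_pos.mpr ⟨S, this⟩
      rw [offCount, offCount] at hk
      omega
    have hT'star : ∀ S ∈ T', r ∈ S.1 := by
      intro S hS
      by_contra hrS
      have hmem : S ∈ T'.filter (fun S => r ∉ S.1) := Finset.mem_filter.mpr ⟨hS, hrS⟩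
      have := Finset.card_pos.mpr ⟨S, hmem⟩
      rw [offCount, offCount] at hk
      omega
    have hsubTT' : T ⊆ T' := by
      intro S hS
      have hrs := hTstar S hS
      obtain ⟨a, b, hab, hval⟩ := exists_pair S
      have hrab : r ∈ ({a, b} : Finset (Fin n)) := hval ▸ hrs
      -- let v be the endpoint different from r
      obtain ⟨v, hvS, hvr⟩ : ∃ v, v ∈ S.1 ∧ v ≠ r := by
        rcases Finset.mem_insert.mp hrab with rfl | hr'
        · exact ⟨b, by simp [hval], fun h => hab (h.symm ▸ rfl)⟩
        · rw [Finset.mem_singleton] at hr'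
          subst hr'
          exact ⟨a, by simp [hval], hab⟩
      have hvB : v ∈ B := hT.1 S hS hvS
      have hconnvr : conn T' v r := hT'.2.1 v hvB r hr
      obtain ⟨S', hS', hvS'⟩ := conn_exists_edge hconnvr hvr
      have hrS' : r ∈ S'.1 := hT'star S' hS'
      have h1 : S = mkE v r hvr := eq_mkE_of_mem hvS hrs hvr
      have h2 : S' = mkE v r hvr := eq_mkE_of_mem hvS' hrS' hvr
      rw [h1, ← h2]
      exact hS'
    have hcards : T'.card ≤ T.card := by
      have a1 := hT.2.2; have a2 := hT'.2.2; omega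
    have hTT' : T = T' := Finset.eq_of_subset_of_card_le hsubTT' hcards
    rw [hTT', sub_self]
    exact Ideal.zero_mem _
  | succ k ih =>
    intro T T' hT hT' hk
    by_cases h1 : 0 < offCount r T
    · obtain ⟨T₂, hT₂, hT₂count, hT₂mem⟩ := slide_step hT hr h1
      have hrec := ih T₂ T' hT₂ hT' (by omega)
      have : (monomial (expOf T) (1 : ℂ) : MvPolynomial (Idx n) ℂ) - monomial (expOf T') 1
          = ((monomial (expOf T) 1 : MvPolynomial (Idx n) ℂ) - monomial (expOf T₂) 1)
            + ((monomial (expOf T₂) 1 : MvPolynomial (Idx n) ℂ) - monomial (expOf T') 1) := by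
        ring
      rw [this]
      exact Ideal.add_mem _ hT₂mem hrec
    · by_cases h2 : 0 < offCount r T'
      · obtain ⟨T₂, hT₂, hT₂count, hT₂mem⟩ := slide_step hT' hr h2
        have hrec := ih T T₂ hT hT₂ (by omega)
        have : (monomial (expOf T) (1 : ℂ) : MvPolynomial (Idx n) ℂ) - monomial (expOf T') 1
            = ((monomial (expOf T) 1 : MvPolynomial (Idx n) ℂ) - monomial (expOf T₂) 1)
              - ((monomial (expOf T') 1 : MvPolynomial (Idx n) ℂ) - monomial (expOf T₂) 1) := by
          ring
        rw [this]
        exact Ideal.sub_mem _ hrec hT₂mem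
      · exact ih T T' hT hT' (by omega)

end P19
namespace P19
open Finset MvPolynomial

variable {n m : ℕ}

lemma spanning_vertexSet {B : Finset (Fin n)} {T : Finset (Idx n)}
    (hT : IsSpanningTreeOn B T) (hB : 2 ≤ B.card) : vertexSet T = B := by
  apply Finset.Subset.antisymm
  · intro v hv
    obtain ⟨S, hS, hvS⟩ := mem_vertexSet_iff.mp hv
    exact hT.1 S hS hvS
  · intro v hv
    obtain ⟨w, hw, hwv⟩ : ∃ w ∈ B, w ≠ v := by
      by_contra hno
      push_neg at hno
      have : B ⊆ {v} := fun x hx => Finset.mem_singleton.mpr (hno x hx)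
      have := Finset.card_le_card this
      simp at this
      omega
    obtain ⟨S, hS, hvS⟩ := conn_exists_edge (hT.2.1 v hv w hw) (Ne.symm hwv)
    exact mem_vertexSet_iff.mpr ⟨S, hS, hvS⟩

lemma spanning_to_tree {B : Finset (Fin n)} {T : Finset (Idx n)}
    (hT : IsSpanningTreeOn B T) (hB : 2 ≤ B.card) :
    IsTreeOn T ∧ (vertexSet T).card = B.card := by
  have hvs := spanning_vertexSet hT hB
  refine ⟨⟨?_, ?_⟩, by rw [hvs]⟩
  · intro i hi j hj
    rw [hvs] at hi hj
    exact hT.2.1 i hi j hj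
  · rw [hvs]; exact hT.2.2

/-- any spanning tree of a large vertex set contains a spanning tree of a smaller one -/
lemma prune : ∀ (N : ℕ) (B : Finset (Fin n)) (T : Finset (Idx n)), B.card ≤ N →
    IsSpanningTreeOn B T → ∀ k, 1 ≤ k → k ≤ B.card →
    ∃ B' T', T' ⊆ T ∧ B'.card = k ∧ IsSpanningTreeOn B' T' := by
  intro N
  induction N with
  | zero =>
    intro B T hN hT k hk1 hk2
    omega
  | succ N ih =>
    intro B T hN hT k hk1 hk2
    classical
    rcases eq_or_lt_of_le hk2 with heq | hlt
    · exact ⟨B, T, Finset.Subset.refl T, heq.symm, hT⟩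
    · obtain ⟨hsub, hconn, hcard⟩ := hT
      have hB2 : 2 ≤ B.card := by omega
      -- find a leaf
      have hdeg1 : ∀ v ∈ B, 1 ≤ (T.filter (fun S => v ∈ S.1)).card := by
        intro v hv
        obtain ⟨w, hw, hwv⟩ : ∃ w ∈ B, w ≠ v := by
          by_contra hno
          push_neg at hno
          have : B ⊆ {v} := fun x hx => Finset.mem_singleton.mpr (hno x hx)
          have := Finset.card_le_card this
          simp at this
          omega
        obtain ⟨S, hS, hvS⟩ := conn_exists_edge (hconn v hv w hw) (Ne.symm hwv)
        exact Finset.card_pos.mpr ⟨S, Finset.mem_filter.mpr ⟨hS, hvS⟩⟩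
      have hsum : ∑ v ∈ B, (T.filter (fun S => v ∈ S.1)).card = 2 * T.card := by
        have h1 : ∀ v, (T.filter (fun S => v ∈ S.1)).card
            = ∑ S ∈ T, if v ∈ S.1 then 1 else 0 := by
          intro v; rw [Finset.card_filter]
        calc ∑ v ∈ B, (T.filter (fun S => v ∈ S.1)).card
            = ∑ v ∈ B, ∑ S ∈ T, if v ∈ S.1 then 1 else 0 := by
              exact Finset.sum_congr rfl (fun v _ => h1 v)
          _ = ∑ S ∈ T, ∑ v ∈ B, if v ∈ S.1 then 1 else 0 := Finset.sum_comm
          _ = ∑ S ∈ T, (B.filter (fun v => v ∈ S.1)).card := by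
              exact Finset.sum_congr rfl (fun S _ => (Finset.card_filter _ _).symm)
          _ = ∑ S ∈ T, 2 := by
              refine Finset.sum_congr rfl (fun S hS => ?_)
              have : B.filter (fun v => v ∈ S.1) = S.1 := by
                ext w
                rw [Finset.mem_filter]
                exact ⟨fun h => h.2, fun h => ⟨hsub S hS h, h⟩⟩
              rw [this, S.2]
          _ = 2 * T.card := by rw [Finset.sum_const, smul_eq_mul, mul_comm]
      have hleaf : ∃ v ∈ B, (T.filter (fun S => v ∈ S.1)).card = 1 := by
        by_contra hno
        push_neg at hno
        have h2 : ∀ v ∈ B, 2 ≤ (T.filter (fun S => v ∈ S.1)).card := by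
          intro v hv
          have := hdeg1 v hv
          have := hno v hv
          omega
        have := Finset.sum_le_sum h2
        rw [hsum, Finset.sum_const, smul_eq_mul] at this
        omega
      obtain ⟨v, hvB, hvdeg⟩ := hleaf
      obtain ⟨S₀, hS₀eq⟩ := Finset.card_eq_one.mp hvdeg
      have hS₀mem : S₀ ∈ T.filter (fun S => v ∈ S.1) := by rw [hS₀eq]; exact Finset.mem_singleton_self _
      have hS₀T : S₀ ∈ T := (Finset.mem_filter.mp hS₀mem).1
      have hvS₀ : v ∈ S₀.1 := (Finset.mem_filter.mp hS₀mem).2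
      set B' := B.erase v with hB'
      set T' := T.erase S₀ with hT'
      have hvnotT' : ∀ S ∈ T', v ∉ S.1 := by
        intro S hS hvS
        obtain ⟨hSne, hST⟩ := Finset.mem_erase.mp hS
        exact hSne (Finset.mem_singleton.mp (hS₀eq ▸ Finset.mem_filter.mpr ⟨hST, hvS⟩))
      have hT'span : IsSpanningTreeOn B' T' := by
        refine ⟨?_, ?_, ?_⟩
        · intro S hS w hw
          refine Finset.mem_erase.mpr ⟨?_, hsub S (Finset.mem_of_mem_erase hS) hw⟩
          intro hEq; subst hEq; exact hvnotT' S hS hw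
        · intro a ha b hb
          obtain ⟨hav, haB⟩ := Finset.mem_erase.mp ha
          obtain ⟨hbv, hbB⟩ := Finset.mem_erase.mp hb
          obtain ⟨p, q, hpq, hval⟩ := exists_pair S₀
          have hins : insert S₀ T' = T := Finset.insert_erase hS₀T
          have hconn' : conn T a b := hconn a haB b hbB
          rw [← hins] at hconn'
          rw [conn_insert_iff hval] at hconn'
          -- v is one of p,q ; in all cases connectivity through S₀ forces hitting v
          have hviso : ∀ c : Fin n, conn T' c v → c = v := by
            intro c hc
            exact (conn_isolated hvnotT' (conn_symm hc)).symm
          have hvpq : v = p ∨ v = q := by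
            have := hval ▸ hvS₀
            simpa using this
          rcases hconn' with h | ⟨h1, h2⟩ | ⟨h1, h2⟩
          · exact h
          · rcases hvpq with rfl | rfl
            · exact absurd (hviso a h1) hav
            · exact absurd ((conn_isolated hvnotT' h2).symm) hbv
          · rcases hvpq with rfl | rfl
            · exact absurd ((conn_isolated hvnotT' h2).symm) hbv
            · exact absurd (hviso a h1) hav
        · rw [Finset.card_erase_of_mem hS₀T, Finset.card_erase_of_mem hvB]
          omega
      have hB'card : B'.card = B.card - 1 := Finset.card_erase_of_mem hvB
      obtain ⟨B'', T'', hsub'', hcard'', hspan''⟩ :=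
        ih B' T' (by omega) hT'span k hk1 (by omega)
      exact ⟨B'', T'', hsub''.trans (Finset.erase_subset _ _), hcard'', hspan''⟩

/-- squarefree monomials with a component of more than `m` vertices lie in the ideal -/
lemma big_component_mem {E : Finset (Idx n)} (hE : Acyclic E) {i : Fin n}
    (hbig : m + 1 ≤ (classOf E i).card) (hm : 1 ≤ m) :
    (monomial (expOf E) (1 : ℂ) : MvPolynomial (Idx n) ℂ) ∈ idealInm n m := by
  have hspan := spanningTree_of_acyclic hE i
  obtain ⟨B', T', hT'sub, hB'card, hT'span⟩ :=
    prune (classOf E i).card _ _ le_rfl hspan (m + 1) (by omega) hbig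
  have h2 : 2 ≤ B'.card := by omega
  obtain ⟨htree, hvcard⟩ := spanning_to_tree hT'span h2
  have hsubE : T' ⊆ E := hT'sub.trans (compEdges_subset _ _)
  have hle : expOf T' ≤ expOf E := by
    intro S
    rw [expOf_apply, expOf_apply]
    split_ifs with h1 h2'
    · omega
    · exact absurd (hsubE h1) h2'
    · omega
    · omega
  exact monomial_mem_of_tree_le htree (by rw [hvcard, hB'card]) hle 1

end P19
namespace P19
open Finset MvPolynomial

variable {n m : ℕ}

/-- edges of `E` are distributed among the components -/
lemma sum_comps_expOf (E : Finset (Idx n)) :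
    ∑ B ∈ comps E, expOf (compEdges E B) = expOf E := by
  classical
  ext S
  rw [Finset.sum_apply']
  rw [expOf_apply]
  split_ifs with hSE
  · obtain ⟨a, b, hab, hval⟩ := exists_pair S
    have haS : a ∈ S.1 := by simp [hval]
    set B₀ := classOf E a with hB₀
    have hB₀mem : B₀ ∈ comps E := mem_comps.mpr ⟨a, rfl⟩
    have hsubB₀ : S.1 ⊆ B₀ := class_closed hSE haS (self_mem_classOf a)
    rw [Finset.sum_eq_single_of_mem B₀ hB₀mem]
    · rw [expOf_apply, if_pos (mem_compEdges.mpr ⟨hSE, hsubB₀⟩)]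
    · intro B hB hne
      rw [expOf_apply, if_neg]
      intro hmem
      obtain ⟨x, hx⟩ := mem_comps.mp hB
      have hsubB : S.1 ⊆ B := (mem_compEdges.mp hmem).2
      have haB : a ∈ B := hsubB haS
      rw [hx] at haB
      have : classOf E x = classOf E a := classOf_eq_of_conn (mem_classOf.mp haB)
      exact hne (hx.trans this)
  · apply Finset.sum_eq_zero
    intro B hB
    rw [expOf_apply, if_neg]
    intro hmem
    exact hSE (mem_compEdges.mp hmem).1

/-- if all components are small, the components form an admissible partition -/
lemma comps_isPart {E : Finset (Idx n)} (h : ∀ i : Fin n, (classOf E i).card ≤ m) :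
    IsPartNM n m (comps E) := by
  constructor
  · intro B hB
    obtain ⟨i, rfl⟩ := mem_comps.mp hB
    exact ⟨⟨i, self_mem_classOf i⟩, h i⟩
  · intro i
    refine ⟨classOf E i, ⟨mem_comps.mpr ⟨i, rfl⟩, self_mem_classOf i⟩, ?_⟩
    rintro B ⟨hB, hiB⟩
    obtain ⟨x, rfl⟩ := mem_comps.mp hB
    exact classOf_eq_of_conn (mem_classOf.mp hiB)

section Partition

variable {Q : Finset (Finset (Fin n))} {t : Finset (Fin n) → Finset (Idx n)}

lemma part_disjoint (hQ : IsPartNM n m Q) {B B' : Finset (Fin n)} (hB : B ∈ Q) (hB' : B' ∈ Q)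
    {v : Fin n} (hv : v ∈ B) (hv' : v ∈ B') : B = B' := by
  obtain ⟨C, -, hC⟩ := hQ.2 v
  rw [hC B ⟨hB, hv⟩, hC B' ⟨hB', hv'⟩]

lemma part_exp_apply (hQ : IsPartNM n m Q) (ht : ∀ B ∈ Q, IsSpanningTreeOn B (t B))
    (S : Idx n) :
    (∑ B ∈ Q, expOf (t B)) S = if ∃ B ∈ Q, S ∈ t B then 1 else 0 := by
  classical
  rw [Finset.sum_apply']
  split_ifs with hex
  · obtain ⟨B₀, hB₀, hSB₀⟩ := hex
    rw [Finset.sum_eq_single_of_mem B₀ hB₀]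
    · rw [expOf_apply, if_pos hSB₀]
    · intro B hB hne
      rw [expOf_apply, if_neg]
      intro hSB
      obtain ⟨a, b, hab, hval⟩ := exists_pair S
      have haB : a ∈ B := (ht B hB).1 S hSB (by simp [hval])
      have haB₀ : a ∈ B₀ := (ht B₀ hB₀).1 S hSB₀ (by simp [hval])
      exact hne (part_disjoint hQ hB hB₀ haB haB₀)
  · push_neg at hex
    apply Finset.sum_eq_zero
    intro B hB
    rw [expOf_apply, if_neg (hex B hB)]

lemma part_exp_le_one (hQ : IsPartNM n m Q) (ht : ∀ B ∈ Q, IsSpanningTreeOn B (t B))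
    (S : Idx n) : (∑ B ∈ Q, expOf (t B)) S ≤ 1 := by
  rw [part_exp_apply hQ ht]
  split_ifs <;> omega

lemma part_mem_support (hQ : IsPartNM n m Q) (ht : ∀ B ∈ Q, IsSpanningTreeOn B (t B))
    {S : Idx n} : S ∈ (∑ B ∈ Q, expOf (t B)).support ↔ ∃ B ∈ Q, S ∈ t B := by
  rw [Finsupp.mem_support_iff, part_exp_apply hQ ht]
  split_ifs with h <;> simp [h]

/-- the block of a vertex (in walks through the support, one stays inside a block) -/
lemma part_walk_in_block (hQ : IsPartNM n m Q) (ht : ∀ B ∈ Q, IsSpanningTreeOn B (t B))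
    {B : Finset (Fin n)} (hB : B ∈ Q) {v w : Fin n} (hv : v ∈ B)
    (hc : conn (∑ B ∈ Q, expOf (t B)).support v w) : w ∈ B := by
  induction hc with
  | refl => exact hv
  | tail h1 h2 ih =>
    obtain ⟨S, hS, hc1, hc2, hc3⟩ := h2
    obtain ⟨B', hB', hSB'⟩ := (part_mem_support hQ ht).mp hS
    have h3 : _ ∈ B' := (ht B' hB').1 S hSB' hc1
    have h4 := part_disjoint hQ hB hB' ih h3
    subst h4
    exact (ht B hB).1 S hSB' hc2

lemma part_classOf (hQ : IsPartNM n m Q) (ht : ∀ B ∈ Q, IsSpanningTreeOn B (t B))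
    {B : Finset (Fin n)} (hB : B ∈ Q) {v : Fin n} (hv : v ∈ B) :
    classOf (∑ B ∈ Q, expOf (t B)).support v = B := by
  ext w
  rw [mem_classOf]
  constructor
  · exact part_walk_in_block hQ ht hB hv
  · intro hw
    have hconn : conn (t B) v w := (ht B hB).2.1 v hv w hw
    refine conn_mono ?_ hconn
    intro S hS
    exact (part_mem_support hQ ht).mpr ⟨B, hB, hS⟩

lemma part_comps (hQ : IsPartNM n m Q) (ht : ∀ B ∈ Q, IsSpanningTreeOn B (t B)) :
    comps (∑ B ∈ Q, expOf (t B)).support = Q := by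
  ext C
  rw [mem_comps]
  constructor
  · rintro ⟨v, rfl⟩
    obtain ⟨B, ⟨hB, hvB⟩, -⟩ := hQ.2 v
    rw [part_classOf hQ ht hB hvB]
    exact hB
  · intro hC
    obtain ⟨v, hv⟩ := (hQ.1 C hC).1
    exact ⟨v, (part_classOf hQ ht hC hv).symm⟩

lemma part_acyclic (hQ : IsPartNM n m Q) (ht : ∀ B ∈ Q, IsSpanningTreeOn B (t B)) :
    Acyclic (∑ B ∈ Q, expOf (t B)).support := by
  intro S hS i j hi hj hij hc
  obtain ⟨B, hB, hSB⟩ := (part_mem_support hQ ht).mp hS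
  have hiB : i ∈ B := (ht B hB).1 S hSB hi
  -- the walk between i and j stays inside the block and uses only edges of t B
  set D := (∑ B ∈ Q, expOf (t B)).support with hD
  have hstay : ∀ w w' : Fin n, w ∈ B → conn (D.erase S) w w' →
      conn ((t B).erase S) w w' ∧ w' ∈ B := by
    intro w w' hw hc'
    induction hc' with
    | refl => exact ⟨conn_refl _, hw⟩
    | tail h1 h2 ih =>
      obtain ⟨ih1, ih2⟩ := ih
      obtain ⟨S', hS', hc1, hc2, hc3⟩ := h2
      obtain ⟨hS'ne, hS'D⟩ := Finset.mem_erase.mp hS'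
      obtain ⟨B', hB', hS'B'⟩ := (part_mem_support hQ ht).mp hS'D
      have h3 : _ ∈ B' := (ht B' hB').1 S' hS'B' hc1
      have h4 := part_disjoint hQ hB hB' ih2 h3
      subst h4
      refine ⟨conn_trans ih1 (Relation.ReflTransGen.single
        ⟨S', Finset.mem_erase.mpr ⟨hS'ne, hS'B'⟩, hc1, hc2, hc3⟩), ?_⟩
      exact (ht B hB).1 S' hS'B' hc2
  obtain ⟨hcB, -⟩ := hstay i j hiB hc
  exact spanningTree_acyclic (ht B hB) S hSB i j hi hj hij hcB

end Partition

lemma prod_monomial {α : Type*} (s : Finset α) (f : α → (Idx n →₀ ℕ)) :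
    (∏ b ∈ s, (monomial (f b) 1 : MvPolynomial (Idx n) ℂ)) = monomial (∑ b ∈ s, f b) 1 := by
  classical
  induction s using Finset.induction_on with
  | empty => simp
  | insert _ _ hnot =>
    rename_i a s ih
    rw [Finset.prod_insert hnot, Finset.sum_insert hnot, ih, monomial_mul, one_mul]

end P19
namespace P19
open Finset MvPolynomial

variable {n : ℕ}

def Good (m : ℕ) (d : Idx n →₀ ℕ) : Prop :=
  (∀ S, d S ≤ 1) ∧ Acyclic d.support ∧ ∀ i : Fin n, (classOf d.support i).card ≤ m

open Classical in
noncomputable def NFv (m : ℕ) (d : Idx n →₀ ℕ) : Finset (Finset (Fin n)) →₀ ℂ :=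
  if Good m d then Finsupp.single (comps d.support) 1 else 0

noncomputable def NF (n m : ℕ) :
    MvPolynomial (Idx n) ℂ →ₗ[ℂ] (Finset (Finset (Fin n)) →₀ ℂ) :=
  (MvPolynomial.basisMonomials (Idx n) ℂ).constr ℂ (NFv m)

lemma NF_monomial (m : ℕ) (d : Idx n →₀ ℕ) (c : ℂ) :
    NF n m (monomial d c) = c • NFv m d := by
  have h1 : (monomial d c : MvPolynomial (Idx n) ℂ) = c • monomial d 1 := by
    rw [smul_monomial, smul_eq_mul, mul_one]
  rw [h1, map_smul]
  congr 1
  have h2 : (monomial d 1 : MvPolynomial (Idx n) ℂ)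
      = MvPolynomial.basisMonomials (Idx n) ℂ d := by
    rw [coe_basisMonomials]
  rw [h2, NF, Module.Basis.constr_basis]

lemma nat_support_add {x y : Idx n →₀ ℕ} : (x + y).support = x.support ∪ y.support := by
  ext S
  simp only [Finsupp.mem_support_iff, Finsupp.add_apply, Finset.mem_union]
  omega

lemma NFv_not_squarefree {m : ℕ} {d : Idx n →₀ ℕ} {S : Idx n} (h : 2 ≤ d S) :
    NFv m d = 0 := by
  rw [NFv, if_neg]
  intro hGood
  have := hGood.1 S
  omega

lemma NFv_big_class {m : ℕ} {d : Idx n →₀ ℕ} {i : Fin n}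
    (h : m + 1 ≤ (classOf d.support i).card) : NFv m d = 0 := by
  rw [NFv, if_neg]
  intro hGood
  have := hGood.2.2 i
  omega

lemma NFv_not_acyclic {m : ℕ} {d : Idx n →₀ ℕ} (h : ¬ Acyclic d.support) :
    NFv m d = 0 := by
  rw [NFv, if_neg]
  intro hGood
  exact h hGood.2.1

/-- multiples of tree monomials are killed -/
lemma NFv_tree {m : ℕ} {E : Finset (Idx n)} (hE : IsTreeOn E)
    (hcard : (vertexSet E).card = m + 1) (e : Idx n →₀ ℕ) :
    NFv m (e + expOf E) = 0 := by
  obtain ⟨v, hv⟩ : (vertexSet E).Nonempty := by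
    rw [← Finset.card_pos, hcard]; omega
  have hEsub : E ⊆ (e + expOf E).support := by
    intro S hS
    rw [Finsupp.mem_support_iff, Finsupp.add_apply, expOf_apply, if_pos hS]
    omega
  have hsub : vertexSet E ⊆ classOf (e + expOf E).support v := by
    intro w hw
    rw [mem_classOf]
    exact conn_mono hEsub (hE.1 v hv w hw)
  have hle := Finset.card_le_card hsub
  rw [hcard] at hle
  exact NFv_big_class hle

/-- a triangle in the support kills the normal form -/
lemma NFv_triangle {m : ℕ} {d : Idx n →₀ ℕ} {i j k : Fin n} (hij : i ≠ j) (hjk : j ≠ k)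
    (hik : i ≠ k) (h1 : mkE i j hij ∈ d.support) (h2 : mkE j k hjk ∈ d.support)
    (h3 : mkE i k hik ∈ d.support) : NFv m d = 0 := by
  apply NFv_not_acyclic
  intro hAc
  refine hAc (mkE i k hik) h3 i k (by simp) (by simp) hik ?_
  have hne1 : mkE i j hij ≠ mkE i k hik := by
    intro h
    have : k ∈ (mkE i j hij).1 := by rw [h]; simp
    rcases mem_mkE.mp this with h' | h'
    · exact hik h'.symm
    · exact hjk h'.symm
  have hne2 : mkE j k hjk ≠ mkE i k hik := by
    intro h
    have : i ∈ (mkE j k hjk).1 := by rw [h]; simp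
    rcases mem_mkE.mp this with h' | h'
    · exact hij h'
    · exact hik h'
  refine Relation.ReflTransGen.head (b := j) ?_ (Relation.ReflTransGen.single ?_)
  · exact ⟨mkE i j hij, Finset.mem_erase.mpr ⟨hne1, h1⟩, by simp, by simp, hij⟩
  · exact ⟨mkE j k hjk, Finset.mem_erase.mpr ⟨hne2, h2⟩, by simp, by simp, hjk⟩

end P19
namespace P19
open Finset MvPolynomial

variable {n : ℕ}

lemma NFv_binom {m : ℕ} {i j k : Fin n} (hij : i ≠ j) (hjk : j ≠ k) (hik : i ≠ k)
    (e : Idx n →₀ ℕ) :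
    NFv m (e + (Finsupp.single (mkE i j hij) 1 + Finsupp.single (mkE j k hjk) 1))
      = NFv m (e + (Finsupp.single (mkE i k hik) 1 + Finsupp.single (mkE j k hjk) 1)) := by
  classical
  set Sij := mkE i j hij with hSij
  set Sjk := mkE j k hjk with hSjk
  set Sik := mkE i k hik with hSik
  have hne1 : Sij ≠ Sjk := by
    intro h
    have : i ∈ Sjk.1 := by rw [← h]; simp [hSij]
    rcases mem_mkE.mp this with h' | h' <;> [exact hij h'; exact hik h']
  have hne2 : Sij ≠ Sik := by
    intro h
    have : k ∈ Sij.1 := by rw [h]; simp [hSik]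
    rcases mem_mkE.mp this with h' | h' <;> [exact hik h'.symm; exact hjk h'.symm]
  have hne3 : Sjk ≠ Sik := by
    intro h
    have : j ∈ Sik.1 := by rw [← h]; simp [hSjk]
    rcases mem_mkE.mp this with h' | h' <;> [exact hij h'.symm; exact hjk h']
  set a := e + (Finsupp.single Sij 1 + Finsupp.single Sjk 1) with ha
  set b := e + (Finsupp.single Sik 1 + Finsupp.single Sjk 1) with hb
  have haval : ∀ S, a S = e S + ((if Sij = S then 1 else 0) + (if Sjk = S then 1 else 0)) := by
    intro S
    rw [ha, Finsupp.add_apply, Finsupp.add_apply, Finsupp.single_apply, Finsupp.single_apply]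
  have hbval : ∀ S, b S = e S + ((if Sik = S then 1 else 0) + (if Sjk = S then 1 else 0)) := by
    intro S
    rw [hb, Finsupp.add_apply, Finsupp.add_apply, Finsupp.single_apply, Finsupp.single_apply]
  by_cases hsfe : ∀ S, e S ≤ 1
  case neg =>
    push_neg at hsfe
    obtain ⟨S₀, hS₀⟩ := hsfe
    have h1 : 2 ≤ a S₀ := by rw [haval]; omega
    have h2 : 2 ≤ b S₀ := by rw [hbval]; omega
    rw [NFv_not_squarefree h1, NFv_not_squarefree h2]
  by_cases hjke : Sjk ∈ e.support
  case pos =>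
    rw [Finsupp.mem_support_iff] at hjke
    have h1 : 2 ≤ a Sjk := by rw [haval, if_neg hne1, if_pos rfl]; omega
    have h2 : 2 ≤ b Sjk := by rw [hbval, if_neg (Ne.symm hne3), if_pos rfl]; omega
    rw [NFv_not_squarefree h1, NFv_not_squarefree h2]
  rw [Finsupp.notMem_support_iff] at hjke
  by_cases hije : Sij ∈ e.support
  · -- `a` has a square at Sij
    rw [Finsupp.mem_support_iff] at hije
    have h1 : 2 ≤ a Sij := by rw [haval, if_pos rfl, if_neg (Ne.symm hne1)]; omega
    rw [NFv_not_squarefree h1]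
    by_cases hike : Sik ∈ e.support
    · rw [Finsupp.mem_support_iff] at hike
      have h2 : 2 ≤ b Sik := by rw [hbval, if_pos rfl, if_neg hne3]; omega
      rw [NFv_not_squarefree h2]
    · rw [Finsupp.notMem_support_iff] at hike
      -- b contains the triangle
      have hm1 : Sij ∈ b.support := by
        rw [Finsupp.mem_support_iff, hbval, if_neg (Ne.symm hne2), if_neg (Ne.symm hne1)]
        omega
      have hm2 : Sjk ∈ b.support := by
        rw [Finsupp.mem_support_iff, hbval, if_neg (Ne.symm hne3), if_pos rfl]; omega
      have hm3 : Sik ∈ b.support := by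
        rw [Finsupp.mem_support_iff, hbval, if_pos rfl, if_neg hne3]; omega
      rw [NFv_triangle hij hjk hik hm1 hm2 hm3]
  · rw [Finsupp.notMem_support_iff] at hije
    by_cases hike : Sik ∈ e.support
    · -- `b` has a square at Sik, `a` contains the triangle
      rw [Finsupp.mem_support_iff] at hike
      have h2 : 2 ≤ b Sik := by rw [hbval, if_pos rfl, if_neg hne3]; omega
      rw [NFv_not_squarefree h2]
      have hm1 : Sij ∈ a.support := by
        rw [Finsupp.mem_support_iff, haval, if_pos rfl, if_neg (Ne.symm hne1)]; omega
      have hm2 : Sjk ∈ a.support := by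
        rw [Finsupp.mem_support_iff, haval, if_neg hne1, if_pos rfl]; omega
      have hm3 : Sik ∈ a.support := by
        rw [Finsupp.mem_support_iff, haval, if_neg hne2, if_neg hne3]; omega
      rw [NFv_triangle hij hjk hik hm1 hm2 hm3]
    · -- main case : both squarefree, supports differ by the exchange
      rw [Finsupp.notMem_support_iff] at hike
      have hmemFa : ∀ S, S ∈ a.support ↔ S ∈ e.support ∨ S = Sij ∨ S = Sjk := by
        intro S
        rw [ha, nat_support_add, nat_support_add,
          Finsupp.support_single_ne_zero _ one_ne_zero,
          Finsupp.support_single_ne_zero _ one_ne_zero]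
        simp; tauto
      have hmemFb : ∀ S, S ∈ b.support ↔ S ∈ e.support ∨ S = Sik ∨ S = Sjk := by
        intro S
        rw [hb, nat_support_add, nat_support_add,
          Finsupp.support_single_ne_zero _ one_ne_zero,
          Finsupp.support_single_ne_zero _ one_ne_zero]
        simp; tauto
      have hSijb : Sij ∉ b.support := by
        rw [hmemFb]
        push_neg
        refine ⟨by rw [Finsupp.mem_support_iff]; omega, hne2, hne1⟩
      have hSika : Sik ∉ a.support := by
        rw [hmemFa]
        push_neg
        refine ⟨by rw [Finsupp.mem_support_iff]; omega, Ne.symm hne2, Ne.symm hne3⟩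
      have hSijFa : Sij ∈ a.support := (hmemFa Sij).mpr (Or.inr (Or.inl rfl))
      have hSjkFa : Sjk ∈ a.support := (hmemFa Sjk).mpr (Or.inr (Or.inr rfl))
      have hSikFb : Sik ∈ b.support := (hmemFb Sik).mpr (Or.inr (Or.inl rfl))
      have hSjkFb : Sjk ∈ b.support := (hmemFb Sjk).mpr (Or.inr (Or.inr rfl))
      -- connectivity is unchanged
      have hab : ∀ x y, conn a.support x y → conn b.support x y := by
        intro x y hc
        refine conn_lift ?_ hc
        rintro p q ⟨S, hS, hp, hq, hpq⟩
        rcases (hmemFa S).mp hS with hSe | rfl | rfl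
        · exact Relation.ReflTransGen.single ⟨S, (hmemFb S).mpr (Or.inl hSe), hp, hq, hpq⟩
        · -- step over Sij : connect through k
          have hconnij : conn b.support i j := by
            refine Relation.ReflTransGen.head (b := k) ?_ (Relation.ReflTransGen.single ?_)
            · exact ⟨Sik, hSikFb, by simp [hSik], by simp [hSik], hik⟩
            · exact ⟨Sjk, hSjkFb, by simp [hSjk], by simp [hSjk], Ne.symm hjk⟩
          rw [hSij] at hp hq
          rcases mem_mkE.mp hp with rfl | rfl <;> rcases mem_mkE.mp hq with rfl | rfl
          · exact absurd rfl hpq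
          · exact hconnij
          · exact conn_symm hconnij
          · exact absurd rfl hpq
        · exact Relation.ReflTransGen.single ⟨Sjk, hSjkFb, hp, hq, hpq⟩
      have hba : ∀ x y, conn b.support x y → conn a.support x y := by
        intro x y hc
        refine conn_lift ?_ hc
        rintro p q ⟨S, hS, hp, hq, hpq⟩
        rcases (hmemFb S).mp hS with hSe | rfl | rfl
        · exact Relation.ReflTransGen.single ⟨S, (hmemFa S).mpr (Or.inl hSe), hp, hq, hpq⟩
        · have hconnik : conn a.support i k := by
            refine Relation.ReflTransGen.head (b := j) ?_ (Relation.ReflTransGen.single ?_)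
            · exact ⟨Sij, hSijFa, by simp [hSij], by simp [hSij], hij⟩
            · exact ⟨Sjk, hSjkFa, by simp [hSjk], by simp [hSjk], hjk⟩
          rw [hSik] at hp hq
          rcases mem_mkE.mp hp with rfl | rfl <;> rcases mem_mkE.mp hq with rfl | rfl
          · exact absurd rfl hpq
          · exact hconnik
          · exact conn_symm hconnik
          · exact absurd rfl hpq
        · exact Relation.ReflTransGen.single ⟨Sjk, hSjkFa, hp, hq, hpq⟩
      have hclass : classOf a.support = classOf b.support := by
        funext v
        ext w
        rw [mem_classOf, mem_classOf]
        exact ⟨hab v w, hba v w⟩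
      have hcomps : comps a.support = comps b.support := by rw [comps, comps, hclass]
      have hcnum : cnum a.support = cnum b.support := by rw [cnum, cnum, hcomps]
      have hcardFa : a.support.card = e.support.card + 2 := by
        have hfa : a.support = insert Sij (insert Sjk e.support) := by
          ext S
          rw [hmemFa S, Finset.mem_insert, Finset.mem_insert]
          tauto
        rw [hfa, Finset.card_insert_of_notMem, Finset.card_insert_of_notMem]
        · rw [Finsupp.mem_support_iff]; omega
        · rw [Finset.mem_insert]
          push_neg
          exact ⟨hne1, by rw [Finsupp.mem_support_iff]; omega⟩
      have hcardFb : b.support.card = e.support.card + 2 := by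
        have hfb : b.support = insert Sik (insert Sjk e.support) := by
          ext S
          rw [hmemFb S, Finset.mem_insert, Finset.mem_insert]
          tauto
        rw [hfb, Finset.card_insert_of_notMem, Finset.card_insert_of_notMem]
        · rw [Finsupp.mem_support_iff]; omega
        · rw [Finset.mem_insert]
          push_neg
          exact ⟨hne3.symm, by rw [Finsupp.mem_support_iff]; omega⟩
      have hacy : Acyclic a.support ↔ Acyclic b.support := by
        constructor
        · intro hA
          apply acyclic_of_cnum
          rw [← hcnum, hcardFb, ← hcardFa]
          exact hA.cnum_add_card
        · intro hA
          apply acyclic_of_cnum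
          rw [hcnum, hcardFa, ← hcardFb]
          exact hA.cnum_add_card
      have hsfa : ∀ S, a S ≤ 1 := by
        intro S
        rw [haval]
        by_cases h1 : Sij = S
        · subst h1
          rw [if_pos rfl, if_neg (Ne.symm hne1)]
          omega
        · by_cases h2 : Sjk = S
          · subst h2
            rw [if_neg h1, if_pos rfl]
            omega
          · rw [if_neg h1, if_neg h2]
            have := hsfe S
            omega
      have hsfb : ∀ S, b S ≤ 1 := by
        intro S
        rw [hbval]
        by_cases h1 : Sik = S
        · subst h1
          rw [if_pos rfl, if_neg hne3.symm.symm]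
          omega
        · by_cases h2 : Sjk = S
          · subst h2
            rw [if_neg h1, if_pos rfl]
            omega
          · rw [if_neg h1, if_neg h2]
            have := hsfe S
            omega
      have hGood : Good m a ↔ Good m b := by
        rw [Good, Good]
        constructor
        · rintro ⟨-, h2, h3⟩
          exact ⟨hsfb, hacy.mp h2, by rw [← hclass]; exact h3⟩
        · rintro ⟨-, h2, h3⟩
          exact ⟨hsfa, hacy.mpr h2, by rw [hclass]; exact h3⟩
      rw [NFv, NFv]
      by_cases hG : Good m a
      · rw [if_pos hG, if_pos (hGood.mp hG), hcomps]
      · rw [if_neg hG, if_neg (fun h => hG (hGood.mpr h))]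

end P19
namespace P19
open Finset MvPolynomial

variable {n : ℕ}

lemma NFv_part {m : ℕ} {Q : Finset (Finset (Fin n))} (hQ : IsPartNM n m Q)
    {t : Finset (Fin n) → Finset (Idx n)} (ht : ∀ B ∈ Q, IsSpanningTreeOn B (t B)) :
    NFv m (∑ B ∈ Q, expOf (t B)) = Finsupp.single Q 1 := by
  have hGood : Good m (∑ B ∈ Q, expOf (t B)) := by
    refine ⟨part_exp_le_one hQ ht, part_acyclic hQ ht, ?_⟩
    intro i
    obtain ⟨B, ⟨hB, hiB⟩, -⟩ := hQ.2 i
    rw [part_classOf hQ ht hB hiB]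
    exact (hQ.1 B hB).2
  rw [NFv, if_pos hGood, part_comps hQ ht]

lemma NF_monomial_mul_gen {m : ℕ} (g : MvPolynomial (Idx n) ℂ)
    (hg : g ∈ (({f | ∃ S : Idx n, f = X S ^ 2} ∪
      {f | ∃ i j k : Fin n, i ≠ j ∧ j ≠ k ∧ i ≠ k ∧
        f = XE i j * XE j k - XE i k * XE j k}) ∪
      {f | ∃ E : Finset (Idx n), IsTreeOn E ∧ (vertexSet E).card = m + 1 ∧
        f = ∏ S ∈ E, X S} : Set (MvPolynomial (Idx n) ℂ)))
    (e : Idx n →₀ ℕ) (c : ℂ) : NF n m (monomial e c * g) = 0 := by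
  rcases hg with (⟨S, rfl⟩ | ⟨i, j, k, hij, hjk, hik, rfl⟩) | ⟨E, hE, hcard, rfl⟩
  · rw [X_pow_eq_monomial, monomial_mul, NF_monomial]
    have h2 : 2 ≤ ((e + Finsupp.single S 2 : Idx n →₀ ℕ)) S := by
      rw [Finsupp.add_apply, Finsupp.single_apply, if_pos rfl]
      omega
    rw [NFv_not_squarefree h2, smul_zero]
  · have h1 : (XE i j * XE j k : MvPolynomial (Idx n) ℂ)
        = monomial (Finsupp.single (mkE i j hij) 1 + Finsupp.single (mkE j k hjk) 1) 1 := by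
      rw [XE_eq hij, XE_eq hjk, X, X, monomial_mul, one_mul]
    have h2 : (XE i k * XE j k : MvPolynomial (Idx n) ℂ)
        = monomial (Finsupp.single (mkE i k hik) 1 + Finsupp.single (mkE j k hjk) 1) 1 := by
      rw [XE_eq hik, XE_eq hjk, X, X, monomial_mul, one_mul]
    rw [h1, h2, mul_sub, monomial_mul, monomial_mul, map_sub, NF_monomial, NF_monomial,
      NFv_binom hij hjk hik, sub_self]
  · rw [prod_X_eq_monomial, monomial_mul, NF_monomial, NFv_tree hE hcard, smul_zero]

lemma NF_ideal {m : ℕ} {f : MvPolynomial (Idx n) ℂ} (hf : f ∈ idealInm n m) :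
    NF n m f = 0 := by
  have main : ∀ (x : MvPolynomial (Idx n) ℂ), x ∈ idealInm n m →
      ∀ r, NF n m (r * x) = 0 := by
    intro x hx
    rw [idealInm] at hx
    induction hx using Submodule.span_induction with
    | mem x h =>
      intro r
      induction r using MvPolynomial.induction_on' with
      | monomial e c => exact NF_monomial_mul_gen x h e c
      | add p q hp hq => rw [add_mul, map_add, hp, hq, add_zero]
    | zero => intro r; rw [mul_zero, map_zero]
    | add x y hx hy ihx ihy => intro r; rw [mul_add, map_add, ihx r, ihy r, add_zero]
    | smul a x hx ihx => intro r; rw [smul_eq_mul, ← mul_assoc, ihx]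
  have h := main f hf 1
  rwa [one_mul] at h

end P19
namespace P19
open Finset MvPolynomial

variable {n : ℕ} {mo : (Idx n →₀ ℕ) → (Idx n →₀ ℕ) → Prop}

section MO

variable (htri : ∀ a b, mo a b ∨ a = b ∨ mo b a) (hirr : ∀ a, ¬ mo a a)
  (htrans : ∀ a b c, mo a b → mo b c → mo a c)
  (hone : ∀ a, a ≠ 0 → mo 0 a) (hadd : ∀ a b c, mo a b → mo (a + c) (b + c))

include hirr htrans hone hadd in
lemma mo_wf : WellFounded mo := by
  haveI : IsIrrefl (Idx n →₀ ℕ) mo := ⟨hirr⟩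
  haveI : IsTrans (Idx n →₀ ℕ) mo := ⟨htrans⟩
  haveI : IsStrictOrder (Idx n →₀ ℕ) mo := {}
  rw [RelEmbedding.wellFounded_iff_isEmpty]
  constructor
  intro f
  obtain ⟨i, j, hlt, hle⟩ := (Set.isPWO_of_wellQuasiOrderedLE (Set.univ : Set (Idx n →₀ ℕ))).exists_lt
    (f := fun k => f k) (fun _ => Set.mem_univ _)
  have h1 : mo (f j) (f i) := f.map_rel_iff.mpr hlt
  obtain ⟨c, hc⟩ := le_iff_exists_add.mp hle
  by_cases hc0 : c = 0
  · rw [hc0, add_zero] at hc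
    rw [← hc] at h1
    exact hirr _ h1
  · have h2 : mo (0 + f i) (c + f i) := hadd 0 c (f i) (hone c hc0)
    rw [zero_add, add_comm] at h2
    rw [← hc] at h2
    exact hirr _ (htrans _ _ _ h2 h1)

include htri htrans in
lemma finset_max (s : Finset (Idx n →₀ ℕ)) (hs : s.Nonempty) :
    ∃ d ∈ s, ∀ e ∈ s, e ≠ d → mo e d := by
  classical
  induction s using Finset.induction_on with
  | empty => exact absurd hs (by simp)
  | insert _ _ hnot =>
    rename_i a s ih
    rcases s.eq_empty_or_nonempty with rfl | hs'
    · refine ⟨a, Finset.mem_insert_self _ _, ?_⟩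
      intro e he hne
      rcases Finset.mem_insert.mp he with rfl | he
      · exact absurd rfl hne
      · simp at he
    · obtain ⟨d, hd, hmax⟩ := ih hs'
      rcases htri a d with h | h | h
      · refine ⟨d, Finset.mem_insert_of_mem hd, ?_⟩
        intro e he hne
        rcases Finset.mem_insert.mp he with rfl | he
        · exact h
        · exact hmax e he hne
      · subst h
        refine ⟨a, Finset.mem_insert_of_mem hd, ?_⟩
        intro e he hne
        rcases Finset.mem_insert.mp he with rfl | he
        · exact absurd rfl hne
        · exact hmax e he hne
      · refine ⟨a, Finset.mem_insert_self _ _, ?_⟩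
        intro e he hne
        rcases Finset.mem_insert.mp he with rfl | he
        · exact absurd rfl hne
        · by_cases hed : e = d
          · subst hed; exact h
          · exact htrans _ _ _ (hmax e he hed) h
end MO

section MO2

variable (htri : ∀ a b, mo a b ∨ a = b ∨ mo b a) (hirr : ∀ a, ¬ mo a a)
  (htrans : ∀ a b c, mo a b → mo b c → mo a c)
  (hadd : ∀ a b c, mo a b → mo (a + c) (b + c))

include htri htrans in
lemma exists_isLead (f : MvPolynomial (Idx n) ℂ) (hf : f ≠ 0) : ∃ d, IsLead mo f d := by
  obtain ⟨d, hd, hmax⟩ := finset_max htri htrans f.support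
    (by rwa [MvPolynomial.support_nonempty])
  exact ⟨d, hd, hmax⟩

include hirr htrans in
lemma isLead_unique {f : MvPolynomial (Idx n) ℂ} {d d' : Idx n →₀ ℕ}
    (h : IsLead mo f d) (h' : IsLead mo f d') : d = d' := by
  by_contra hne
  exact hirr _ (htrans _ _ _ (h.2 d' h'.1 (fun hh => hne hh.symm)) (h'.2 d h.1 hne))

lemma isLead_monomial (d : Idx n →₀ ℕ) (c : ℂ) (hc : c ≠ 0) :
    IsLead mo (monomial d c) d := by
  constructor
  · rw [support_monomial, if_neg hc]; exact Finset.mem_singleton_self _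
  · intro e he hne
    rw [support_monomial, if_neg hc, Finset.mem_singleton] at he
    exact absurd he hne

include hirr htrans hadd in
lemma isLead_monomial_mul {f : MvPolynomial (Idx n) ℂ} {d : Idx n →₀ ℕ}
    (h : IsLead mo f d) (e : Idx n →₀ ℕ) :
    IsLead mo (monomial e 1 * f) (e + d) := by
  have hmem : ∀ u : Idx n →₀ ℕ, u ∈ (monomial e (1 : ℂ) * f).support ↔
      e ≤ u ∧ (u - e) ∈ f.support := by
    intro u
    rw [MvPolynomial.mem_support_iff, MvPolynomial.mem_support_iff]
    constructor
    · intro hu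
      rw [coeff_monomial_mul'] at hu
      split_ifs at hu with hle
      · rw [one_mul] at hu
        exact ⟨hle, hu⟩
      · exact absurd rfl hu
    · rintro ⟨hle, hu⟩
      rw [coeff_monomial_mul', if_pos hle, one_mul]
      exact hu
  constructor
  · rw [hmem]
    refine ⟨self_le_add_right e d, ?_⟩
    rw [add_tsub_cancel_left]
    exact h.1
  · intro u hu hne
    obtain ⟨hle, hmem'⟩ := (hmem u).mp hu
    have hu_eq : e + (u - e) = u := add_tsub_cancel_of_le hle
    have hne' : u - e ≠ d := by
      intro hh
      rw [hh] at hu_eq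
      exact hne hu_eq.symm
    have := hadd _ _ e (h.2 _ hmem' hne')
    rw [add_comm (u - e) e, add_comm d e, hu_eq] at this
    exact this

lemma isLead_sub_monomial {d e : Idx n →₀ ℕ} (hmo : mo e d) (hne : e ≠ d) :
    IsLead mo (monomial d 1 - monomial e (1 : ℂ)) d := by
  have hcd : coeff d (monomial d 1 - monomial e (1 : ℂ)) = 1 := by
    rw [coeff_sub, coeff_monomial, coeff_monomial, if_pos rfl, if_neg hne, sub_zero]
  constructor
  · rw [MvPolynomial.mem_support_iff, hcd]
    exact one_ne_zero
  · intro u hu hne'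
    rw [MvPolynomial.mem_support_iff] at hu
    have : coeff u (monomial d 1 - monomial e (1 : ℂ))
        = (if d = u then (1 : ℂ) else 0) - (if e = u then 1 else 0) := by
      rw [coeff_sub, coeff_monomial, coeff_monomial]
    rw [this] at hu
    by_cases h1 : e = u
    · subst h1; exact hmo
    · exfalso
      rw [if_neg h1, if_neg (fun hh : d = u => hne' hh.symm), sub_zero] at hu
      exact hu rfl

include hirr htrans hadd in
lemma init_extract {I : Ideal (MvPolynomial (Idx n) ℂ)} {d : Idx n →₀ ℕ}
    (h : (monomial d 1 : MvPolynomial (Idx n) ℂ) ∈ initIdeal mo I) :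
    ∃ g ∈ I, IsLead mo g d := by
  rw [initIdeal] at h
  rw [Ideal.span, Submodule.mem_span_set] at h
  obtain ⟨c, hsupp, hsum⟩ := h
  have hcoeff : coeff d (c.sum fun mi r => r • mi) = 1 := by
    rw [hsum, coeff_monomial, if_pos rfl]
  rw [Finsupp.sum] at hcoeff
  have hne : (∑ g₀ ∈ c.support, coeff d (c g₀ • g₀)) ≠ 0 := by
    rw [← coeff_sum]
    rw [hcoeff]
    exact one_ne_zero
  obtain ⟨g₀, hg₀mem, hg₀⟩ := Finset.exists_ne_zero_of_sum_ne_zero hne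
  obtain ⟨f, hfI, d₀, hlead, hg₀eq⟩ := hsupp hg₀mem
  rw [hg₀eq, smul_eq_mul, coeff_mul_monomial'] at hg₀
  have hle : d₀ ≤ d := by
    by_contra hno
    rw [if_neg hno] at hg₀
    exact hg₀ rfl
  refine ⟨monomial (d - d₀) 1 * f, Ideal.mul_mem_left _ _ hfI, ?_⟩
  have hlead2 := isLead_monomial_mul hirr htrans hadd hlead (d - d₀)
  have : d - d₀ + d₀ = d := tsub_add_cancel_of_le hle
  rwa [this] at hlead2

end MO2

end P19
namespace P19
open Finset MvPolynomial

variable {n m : ℕ} {mo : (Idx n →₀ ℕ) → (Idx n →₀ ℕ) → Prop}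

lemma rew (hm : 1 ≤ m)
    (htri : ∀ a b, mo a b ∨ a = b ∨ mo b a) (hirr : ∀ a, ¬ mo a a)
    (htrans : ∀ a b c, mo a b → mo b c → mo a c)
    (hone : ∀ a, a ≠ 0 → mo 0 a) (hadd : ∀ a b c, mo a b → mo (a + c) (b + c))
    (TB : Finset (Fin n) → Finset (Idx n))
    (hTB : ∀ B : Finset (Fin n), B.Nonempty →
      IsSpanningTreeOn B (TB B) ∧
        ∀ E : Finset (Idx n), IsSpanningTreeOn B E → E = TB B ∨ mo (expOf (TB B)) (expOf E))
    (d : Idx n →₀ ℕ) :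
    ((monomial d (1 : ℂ) : MvPolynomial (Idx n) ℂ) ∈ idealInm n m) ∨
      ∃ Q, IsPartNM n m Q ∧
        ((monomial d (1 : ℂ) : MvPolynomial (Idx n) ℂ)
            - monomial (∑ B ∈ Q, expOf (TB B)) 1 ∈ idealInm n m) ∧
        (d = ∑ B ∈ Q, expOf (TB B) ∨ mo (∑ B ∈ Q, expOf (TB B)) d) := by
  induction d using WellFounded.induction (mo_wf hirr htrans hone hadd) with
  | _ d IH =>
  by_cases hsf : ∀ S, d S ≤ 1
  case neg =>
    push_neg at hsf
    obtain ⟨S, hS⟩ := hsf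
    exact Or.inl (monomial_mem_of_two_le hS 1)
  set E := d.support with hE
  have hdE : d = expOf E := (expOf_eq_of_squarefree hsf).symm
  by_cases hac : Acyclic E
  case neg =>
    rw [hdE]
    exact Or.inl (not_acyclic_mem hac)
  by_cases hbig : ∃ i : Fin n, m + 1 ≤ (classOf E i).card
  case pos =>
    obtain ⟨i, hi⟩ := hbig
    rw [hdE]
    exact Or.inl (big_component_mem hac hi hm)
  push_neg at hbig
  have hsmall : ∀ i : Fin n, (classOf E i).card ≤ m := fun i => by
    have := hbig i; omega
  set Q₀ := comps E with hQ₀def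
  have hQ₀ : IsPartNM n m Q₀ := comps_isPart hsmall
  have hspan : ∀ B ∈ Q₀, IsSpanningTreeOn B (compEdges E B) := by
    intro B hB
    obtain ⟨i, rfl⟩ := mem_comps.mp hB
    exact spanningTree_of_acyclic hac i
  have hnonempty : ∀ B ∈ Q₀, B.Nonempty := by
    intro B hB
    obtain ⟨i, rfl⟩ := mem_comps.mp hB
    exact ⟨i, self_mem_classOf i⟩
  have hsum : ∑ B ∈ Q₀, expOf (compEdges E B) = expOf E := sum_comps_expOf E
  by_cases hall : ∀ B ∈ Q₀, compEdges E B = TB B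
  case pos =>
    refine Or.inr ⟨Q₀, hQ₀, ?_, ?_⟩
    · have : d = ∑ B ∈ Q₀, expOf (TB B) := by
        rw [hdE, ← hsum]
        exact (Finset.sum_congr rfl fun B hB => by rw [hall B hB]).symm
      rw [← this, sub_self]
      exact Ideal.zero_mem _
    · left
      rw [hdE, ← hsum]
      exact (Finset.sum_congr rfl fun B hB => by rw [hall B hB]).symm
  push_neg at hall
  obtain ⟨B₀, hB₀Q, hB₀ne⟩ := hall
  have hB₀nonempty := hnonempty B₀ hB₀Q
  have hB₀span := hspan B₀ hB₀Q
  have hTBspan := (hTB B₀ hB₀nonempty).1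
  have hmo : mo (expOf (TB B₀)) (expOf (compEdges E B₀)) := by
    rcases (hTB B₀ hB₀nonempty).2 _ hB₀span with h | h
    · exact absurd h hB₀ne
    · exact h
  set Rr := expOf (E \ compEdges E B₀) with hRr
  have hdd : expOf (compEdges E B₀) + Rr = d := by
    rw [hRr, hdE]
    exact expOf_sdiff_add (compEdges_subset E B₀)
  set d' := expOf (TB B₀) + Rr with hd'
  have hmo' : mo d' d := by
    rw [← hdd, hd']
    exact hadd _ _ Rr hmo
  have hdiff : (monomial d (1 : ℂ) : MvPolynomial (Idx n) ℂ) - monomial d' 1 ∈ idealInm n m := by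
    have h1 : (monomial d (1 : ℂ) : MvPolynomial (Idx n) ℂ)
        = monomial (expOf (compEdges E B₀)) 1 * monomial Rr 1 := by
      rw [monomial_mul, one_mul, hdd]
    have h2 : (monomial d' (1 : ℂ) : MvPolynomial (Idx n) ℂ)
        = monomial (expOf (TB B₀)) 1 * monomial Rr 1 := by
      rw [monomial_mul, one_mul, hd']
    rw [h1, h2, ← sub_mul]
    exact Ideal.mul_mem_right _ _ (trees_congruent hB₀nonempty hB₀span hTBspan)
  rcases IH d' hmo' with h | ⟨Q, hQ, hdiff', hord'⟩
  · left
    have : (monomial d (1 : ℂ) : MvPolynomial (Idx n) ℂ)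
        = ((monomial d 1 : MvPolynomial (Idx n) ℂ) - monomial d' 1) + monomial d' 1 := by ring
    rw [this]
    exact Ideal.add_mem _ hdiff h
  · refine Or.inr ⟨Q, hQ, ?_, ?_⟩
    · have : (monomial d (1 : ℂ) : MvPolynomial (Idx n) ℂ)
          - monomial (∑ B ∈ Q, expOf (TB B)) 1
          = ((monomial d 1 : MvPolynomial (Idx n) ℂ) - monomial d' 1)
            + ((monomial d' 1 : MvPolynomial (Idx n) ℂ)
              - monomial (∑ B ∈ Q, expOf (TB B)) 1) := by ring
      rw [this]
      exact Ideal.add_mem _ hdiff hdiff'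
    · right
      rcases hord' with h | h
      · rw [← h]; exact hmo'
      · exact htrans _ _ _ h hmo'

end P19
open P19 Finset in
theorem stmt19 (n m : ℕ) (hn : 1 ≤ n) (hm : 1 ≤ m)
    -- `mo` is a monomial order (as a strict total order on exponents):
    (mo : (Idx n →₀ ℕ) → (Idx n →₀ ℕ) → Prop)
    (htri : ∀ a b, mo a b ∨ a = b ∨ mo b a)
    (hirr : ∀ a, ¬ mo a a)
    (htrans : ∀ a b c, mo a b → mo b c → mo a c)
    (hone : ∀ a, a ≠ 0 → mo 0 a)
    (hadd : ∀ a b c, mo a b → mo (a + c) (b + c))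
    -- `T_B` is the tree on vertex set `B` with `mo`-minimal monomial:
    (TB : Finset (Fin n) → Finset (Idx n))
    (hTB : ∀ B : Finset (Fin n), B.Nonempty →
      IsSpanningTreeOn B (TB B) ∧
        ∀ E : Finset (Idx n), IsSpanningTreeOn B E → E = TB B ∨ mo (expOf (TB B)) (expOf E)) :
    -- (a) the standard monomials of `I_{n,m}` are exactly the `∏_{B ∈ π} 𝔪(T_B)`:
    ((∀ d : Idx n →₀ ℕ,
        (monomial d (1 : ℂ)) ∉ initIdeal mo (idealInm n m) ↔
          ∃ Q : Finset (Finset (Fin n)), IsPartNM n m Q ∧ d = ∑ B ∈ Q, expOf (TB B)) ∧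
      -- (b) these monomials descend to a vector space basis of the quotient:
      LinearIndependent ℂ (fun Q : {Q : Finset (Finset (Fin n)) // IsPartNM n m Q} =>
        Ideal.Quotient.mk (idealInm n m) (∏ B ∈ Q.1, ∏ S ∈ TB B, X S)) ∧
      Submodule.span ℂ
        (Set.range (fun Q : {Q : Finset (Finset (Fin n)) // IsPartNM n m Q} =>
          Ideal.Quotient.mk (idealInm n m) (∏ B ∈ Q.1, ∏ S ∈ TB B, X S))) = ⊤) := by
  classical
  set I := idealInm n m with hI
  have hTBspan : ∀ Q : Finset (Finset (Fin n)), IsPartNM n m Q →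
      ∀ B ∈ Q, IsSpanningTreeOn B (TB B) := fun Q hQ B hB => (hTB B (hQ.1 B hB).1).1
  have hNFstd : ∀ Q : Finset (Finset (Fin n)), IsPartNM n m Q →
      NF n m (monomial (∑ B ∈ Q, expOf (TB B)) (1 : ℂ)) = Finsupp.single Q 1 := by
    intro Q hQ
    rw [NF_monomial, NFv_part hQ (hTBspan Q hQ), one_smul]
  have hprod : ∀ Q : Finset (Finset (Fin n)),
      (∏ B ∈ Q, ∏ S ∈ TB B, (X S : MvPolynomial (Idx n) ℂ))
        = monomial (∑ B ∈ Q, expOf (TB B)) 1 := by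
    intro Q
    rw [← prod_monomial]
    exact Finset.prod_congr rfl fun B _ => prod_X_eq_monomial (TB B)
  have hrew := rew hm htri hirr htrans hone hadd TB hTB
  have hmk_smul : ∀ (c : ℂ) (p : MvPolynomial (Idx n) ℂ),
      Ideal.Quotient.mk I (c • p) = c • Ideal.Quotient.mk I p := fun c p => by
    rw [← Ideal.Quotient.mkₐ_eq_mk ℂ, map_smul]
  have hredex : ∀ e : Idx n →₀ ℕ, ∃ r : MvPolynomial (Idx n) ℂ,
      ((monomial e (1 : ℂ)) - r ∈ I) ∧ (r = 0 ∨ ∃ Q', IsPartNM n m Q' ∧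
        r = monomial (∑ B ∈ Q', expOf (TB B)) 1 ∧
        (e = (∑ B ∈ Q', expOf (TB B)) ∨ mo (∑ B ∈ Q', expOf (TB B)) e)) := by
    intro e
    rcases hrew e with h | ⟨Q', hQ', hdiff, hord⟩
    · exact ⟨0, by rwa [sub_zero], Or.inl rfl⟩
    · exact ⟨_, hdiff, Or.inr ⟨Q', hQ', rfl, hord⟩⟩
  choose ρ hρ1 hρ2 using hredex
  have hstd_not_init : ∀ Q : Finset (Finset (Fin n)), IsPartNM n m Q →
      (monomial (∑ B ∈ Q, expOf (TB B)) (1 : ℂ)) ∉ initIdeal mo I := by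
    intro Q hQ hmem
    obtain ⟨g, hgI, hlead⟩ := init_extract hirr htrans hadd hmem
    set d := ∑ B ∈ Q, expOf (TB B) with hd
    set h := ∑ e ∈ g.support, (coeff e g) • ρ e with hh
    have hgh : g - h ∈ I := by
      have hg : (∑ e ∈ g.support, monomial e (coeff e g)) = g := support_sum_monomial_coeff g
      have hkey : g - h = ∑ e ∈ g.support, (coeff e g) • ((monomial e 1) - ρ e) := by
        conv_lhs => rw [← hg]
        rw [hh, ← Finset.sum_sub_distrib]
        refine Finset.sum_congr rfl fun e _ => ?_
        rw [smul_sub]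
        congr 1
        rw [smul_monomial, smul_eq_mul, mul_one]
      rw [hkey]
      refine Ideal.sum_mem _ fun e _ => ?_
      rw [MvPolynomial.smul_eq_C_mul]
      exact Ideal.mul_mem_left _ _ (hρ1 e)
    have hhI : h ∈ I := by
      have h2 := Ideal.sub_mem I hgI hgh
      rwa [sub_sub_cancel] at h2
    have hNFh : NF n m h = 0 := NF_ideal hhI
    have heval : (NF n m h) Q = coeff d g := by
      rw [hh, map_sum, Finset.sum_apply']
      rw [Finset.sum_eq_single_of_mem d hlead.1]
      · rcases hρ2 d with h0 | ⟨Q', hQ', heq, hord⟩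
        · exfalso
          have hdI : (monomial d (1 : ℂ) : MvPolynomial (Idx n) ℂ) ∈ I := by
            have := hρ1 d
            rwa [h0, sub_zero] at this
          have := NF_ideal hdI
          rw [hNFstd Q hQ] at this
          exact one_ne_zero (Finsupp.single_eq_zero.mp this)
        · have hQQ' : Q' = Q := by
            have h3 := NF_ideal (hρ1 d)
            rw [map_sub, heq, hNFstd Q hQ, hNFstd Q' hQ', sub_eq_zero] at h3
            exact Finsupp.single_left_injective one_ne_zero h3.symm
          rw [map_smul, heq, hNFstd Q' hQ', Finsupp.smul_apply, Finsupp.single_apply,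
            if_pos hQQ', smul_eq_mul, mul_one]
      · intro e he hne
        rcases hρ2 e with h0 | ⟨Q', hQ', heq, hord⟩
        · rw [h0, smul_zero, map_zero, Finsupp.zero_apply]
        · have hQ'ne : Q' ≠ Q := by
            intro hEq
            subst hEq
            rcases hord with h' | h'
            · exact hne h'
            · exact hirr _ (htrans _ _ _ h' (hlead.2 e he hne))
          rw [map_smul, heq, hNFstd Q' hQ', Finsupp.smul_apply, Finsupp.single_apply,
            if_neg hQ'ne, smul_eq_mul, mul_zero]
    rw [hNFh, Finsupp.zero_apply] at heval
    exact (MvPolynomial.mem_support_iff.mp hlead.1) heval.symm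
  refine ⟨?_, ?_, ?_⟩
  · -- part (a)
    intro d
    constructor
    · intro hnot
      by_contra hne
      apply hnot
      rcases hrew d with h | ⟨Q, hQ, hdiff, hord⟩
      · exact Ideal.subset_span ⟨monomial d 1, h, d, isLead_monomial d 1 one_ne_zero, rfl⟩
      · have hmo2 : mo (∑ B ∈ Q, expOf (TB B)) d := by
          rcases hord with h' | h'
          · exact absurd ⟨Q, hQ, h'⟩ hne
          · exact h'
        have hdne : (∑ B ∈ Q, expOf (TB B)) ≠ d := fun h' => hne ⟨Q, hQ, h'.symm⟩
        exact Ideal.subset_span ⟨_, hdiff, d, isLead_sub_monomial hmo2 hdne, rfl⟩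
    · rintro ⟨Q, hQ, rfl⟩
      exact hstd_not_init Q hQ
  · -- part (b)
    rw [linearIndependent_iff']
    intro s g hsum Q₀ hQ₀mem
    set h := ∑ Q ∈ s, g Q • (monomial (∑ B ∈ Q.1, expOf (TB B)) (1 : ℂ)) with hh
    have hmkh : Ideal.Quotient.mk I h = 0 := by
      rw [hh, map_sum, ← hsum]
      refine Finset.sum_congr rfl fun Q _ => ?_
      rw [hmk_smul, hprod Q.1]
    have hhI : h ∈ I := (Ideal.Quotient.eq_zero_iff_mem).mp hmkh
    have hNFh := NF_ideal hhI
    have heval : (NF n m h) Q₀.1 = g Q₀ := by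
      rw [hh, map_sum, Finset.sum_apply']
      rw [Finset.sum_eq_single_of_mem Q₀ hQ₀mem]
      · rw [map_smul, hNFstd Q₀.1 Q₀.2, Finsupp.smul_apply, Finsupp.single_apply,
          if_pos rfl, smul_eq_mul, mul_one]
      · intro Q hQs hne
        rw [map_smul, hNFstd Q.1 Q.2, Finsupp.smul_apply, Finsupp.single_apply,
          if_neg (fun hEq => hne (Subtype.ext hEq)), smul_eq_mul, mul_zero]
    rw [hNFh, Finsupp.zero_apply] at heval
    exact heval.symm
  · -- part (c)
    rw [eq_top_iff]
    rintro x -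
    obtain ⟨f, rfl⟩ := Ideal.Quotient.mk_surjective x
    induction f using MvPolynomial.induction_on' with
    | monomial u c =>
      rcases hrew u with h | ⟨Q, hQ, hdiff, -⟩
      · have hz : Ideal.Quotient.mk I (monomial u c) = 0 := by
          rw [Ideal.Quotient.eq_zero_iff_mem]
          have hmc : (monomial u c : MvPolynomial (Idx n) ℂ) = C c * monomial u 1 := by
            rw [C_mul_monomial, mul_one]
          rw [hmc]
          exact Ideal.mul_mem_left _ _ h
        rw [hz]
        exact Submodule.zero_mem _
      · have heq : Ideal.Quotient.mk I (monomial u (1 : ℂ))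
            = Ideal.Quotient.mk I (monomial (∑ B ∈ Q, expOf (TB B)) 1) :=
          Ideal.Quotient.eq.mpr hdiff
        have hc : Ideal.Quotient.mk I (monomial u c)
            = c • Ideal.Quotient.mk I (monomial u 1) := by
          rw [← hmk_smul]
          congr 1
          rw [smul_monomial, smul_eq_mul, mul_one]
        rw [hc, heq, ← hprod Q]
        exact Submodule.smul_mem _ _ (Submodule.subset_span ⟨⟨Q, hQ⟩, rfl⟩)
    | add p q hp hq =>
      rw [map_add]
      exact Submodule.add_mem _ hp hq
end
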